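/- arXiv:2409.15708 — 9 statements merged into one kernel-verified Lean document; each statement's English description precedes it below -/
import Mathlib

section
/- Suppose the dataset (H, Ẋ, Λ) with n ≥ n_h satisfies HΛH⊤ ≻ 0 and is generated by a true system Δ_r. Let HΛ^{1/2} = U S V⊤ be a singular value decomposition (U ∈ ℝ^{n_h×n_h} and V ∈ ℝ^{n×n} orthogonal, S ∈ ℝ^{n_h×n}), and define H_s := (n_h/tr(Λ))^{1/2} U (S S⊤)^{1/2} ∈ ℝ^{n_h×n_h} and Ẋ_s := (n_h/tr(Λ))^{1/2} Ẋ Λ^{1/2} V [I_{n_h} 0]⊤ ∈ ℝ^{n_x×n_h}. Then C(H, Ẋ, Λ) ⊆ C(H_s, Ẋ_s, (tr(Λ)/n_h) I_{n_h}), where the latter is the set of admissible systems for the dataset (H_s, Ẋ_s, (tr(Λ)/n_h) I_{n_h}) with the same disturbance bound δ. -/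
open Matrix

/-- The set of admissible systems
`C(H, Ẋ, Λ) := {Δ : Δ E_e Δᵀ + Δ F_e + F_eᵀ Δᵀ + G_e ⪯ 0}` with
`E_e = HΛHᵀ`, `F_e = −HΛẊᵀ`, `G_e = ẊΛẊᵀ − tr(Λ)δ I`. -/
def admisSet (n_x n_h : ℕ) {k : Type*} [Fintype k] (δ : ℝ)
    (H : Matrix (Fin n_h) k ℝ) (Xd : Matrix (Fin n_x) k ℝ) (Λ : Matrix k k ℝ) :
    Set (Matrix (Fin n_x) (Fin n_h) ℝ) :=
  {Δ | (-(Δ * (H * Λ * Hᵀ) * Δᵀ + Δ * (-(H * Λ * Xdᵀ)) + (-(H * Λ * Xdᵀ))ᵀ * Δᵀ +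
      (Xd * Λ * Xdᵀ - (Matrix.trace Λ * δ) • 1))).PosSemidef}

/-!
Write `A = Λ^{1/2}` and `P = [I 0]ᵀ`. Since `S = diag(σ) Pᵀ` and, by uniqueness of positive
semidefinite square roots, `Ssq = diag(σ)`, the SVD gives the factorization `H A = (U Ssq) Mᵀ`
with `M = V P`, and `M` has orthonormal columns. Hence the compressed data `H_s = U Ssq`,
`Ẋ_s = Ẋ A M` (up to the common scalar, which cancels against the new weight) reproduce `E_e`
and `F_e` exactly and keep `tr Λ`, while `G_e` drops by `Ẋ A (I - M Mᵀ) Aᵀ Ẋᵀ ⪰ 0`. So the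
defining matrix inequality only gets weaker.
-/

namespace Matrix

theorem posSemidef_one_sub_mul_conjTranspose {R m n : Type*} [Ring R] [PartialOrder R]
    [StarRing R] [StarOrderedRing R] [Fintype m] [Fintype n] [DecidableEq m] [DecidableEq n]
    {M : Matrix n m R} (hM : Mᴴ * M = 1) : (1 - M * Mᴴ).PosSemidef := by
  have hidem : M * Mᴴ * (M * Mᴴ) = M * Mᴴ := by
    rw [Matrix.mul_assoc, ← Matrix.mul_assoc Mᴴ, hM, Matrix.one_mul]
  have hproj : (1 - M * Mᴴ)ᴴ * (1 - M * Mᴴ) = 1 - M * Mᴴ := by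
    rw [conjTranspose_sub, conjTranspose_one, conjTranspose_mul, conjTranspose_conjTranspose]
    simp only [Matrix.sub_mul, Matrix.mul_sub, Matrix.one_mul, Matrix.mul_one, hidem]
    abel
  exact hproj ▸ posSemidef_conjTranspose_mul_self _

open scoped ComplexOrder in
theorem PosSemidef.eq_of_mul_self_eq {𝕜 m : Type*} [RCLike 𝕜] [Fintype m] [DecidableEq m]
    {A B : Matrix m m 𝕜} (hA : A.PosSemidef) (hB : B.PosSemidef) (h : A * A = B * B) :
    A = B := by
  open scoped MatrixOrder Matrix.Norms.L2Operator in
  exact (CFC.sq_eq_sq_iff A B hA.nonneg hB.nonneg).mp (by rw [sq, sq, h])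

theorem sum_pos_of_posDef_mul_diagonal_mul_transpose {m k : Type*} [Fintype m] [Fintype k]
    [DecidableEq k] [Nonempty m] {H : Matrix m k ℝ} {l : k → ℝ} (hl : ∀ i, 0 ≤ l i)
    (hpd : (H * diagonal l * Hᵀ).PosDef) : 0 < ∑ i, l i := by
  refine (Finset.sum_nonneg fun i _ => hl i).lt_of_ne fun hsum => ?_
  have hl0 : l = 0 := funext fun i =>
    (Finset.sum_eq_zero_iff_of_nonneg fun i _ => hl i).mp hsum.symm i (Finset.mem_univ i)
  have := hpd.dotProduct_mulVec_pos (x := fun _ => 1)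
    (Function.ne_iff.mpr ⟨Classical.arbitrary m, one_ne_zero⟩)
  simp [hl0] at this

/-- The block matrix `[I 0]ᵀ` when `m ≤ n`. -/
def rectId (n m : ℕ) (R : Type*) [Zero R] [One R] : Matrix (Fin n) (Fin m) R :=
  of fun i j => if (i : ℕ) = j then 1 else 0

theorem rectId_transpose_mul_self {n m : ℕ} {R : Type*} [NonAssocSemiring R] (h : m ≤ n) :
    (rectId n m R)ᵀ * rectId n m R = 1 := by
  ext i j
  rw [mul_apply, Finset.sum_eq_single (Fin.castLE h i)]
  · simp [rectId, one_apply, Fin.ext_iff]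
  · intro b _ hb
    simp [rectId, Fin.ext_iff] at hb ⊢
    omega
  · simp

theorem diagonal_mul_rectId_transpose {n m : ℕ} {R : Type*} [NonAssocSemiring R]
    (σ : Fin m → R) :
    diagonal σ * (rectId n m R)ᵀ =
      of fun (i : Fin m) (j : Fin n) => if (j : ℕ) = i then σ i else 0 := by
  ext i j
  simp [rectId, diagonal_mul]

theorem smul_mul_smul_one_mul_smul {R m p q : Type*} [CommSemiring R] [Fintype m]
    [DecidableEq m] {s r : R} (hsr : s * r * s = 1) (X : Matrix p m R) (Y : Matrix m q R) :
    s • X * (r • (1 : Matrix m m R)) * (s • Y) = X * Y := by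
  simp only [Matrix.smul_mul, Matrix.mul_smul, Matrix.mul_one, smul_smul]
  rw [show s * (r * s) = 1 by rw [← hsr]; ring, one_smul]

end Matrix

theorem admisSet_subset_admisSet {n_x n_h : ℕ} {k k' : Type*} [Fintype k] [Fintype k'] {δ : ℝ}
    {H : Matrix (Fin n_h) k ℝ} {Xd : Matrix (Fin n_x) k ℝ} {Λ : Matrix k k ℝ}
    {H' : Matrix (Fin n_h) k' ℝ} {Xd' : Matrix (Fin n_x) k' ℝ} {Λ' : Matrix k' k' ℝ}
    (hE : H' * Λ' * H'ᵀ = H * Λ * Hᵀ) (hF : H' * Λ' * Xd'ᵀ = H * Λ * Xdᵀ)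
    (htr : trace Λ' = trace Λ) (hG : (Xd * Λ * Xdᵀ - Xd' * Λ' * Xd'ᵀ).PosSemidef) :
    admisSet n_x n_h δ H Xd Λ ⊆ admisSet n_x n_h δ H' Xd' Λ' := by
  intro Δ hΔ
  simp only [admisSet, Set.mem_ofPred_eq] at hΔ ⊢
  rw [hE, hF, htr]
  convert hΔ.add hG using 1
  abel

theorem admisSet_subset_of_isometry_factorization {n_x n_h : ℕ} {k j m : Type*}
    [Fintype k] [Fintype j] [Fintype m] [DecidableEq j] [DecidableEq m] {δ : ℝ}
    {H : Matrix (Fin n_h) k ℝ} {Xd : Matrix (Fin n_x) k ℝ} {Λ : Matrix k k ℝ} {A : Matrix k j ℝ}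
    (hΛ : Λ = A * Aᵀ) {K : Matrix (Fin n_h) m ℝ} {M : Matrix j m ℝ} (hM : Mᵀ * M = 1)
    (hHA : H * A = K * Mᵀ) {s r : ℝ} (hsr : s * r * s = 1)
    (htr : trace (r • (1 : Matrix m m ℝ)) = trace Λ) :
    admisSet n_x n_h δ H Xd Λ ⊆
      admisSet n_x n_h δ (s • K) (s • (Xd * A * M)) (r • 1) := by
  subst hΛ
  have hHA' : Aᵀ * Hᵀ = M * Kᵀ := by
    simpa only [transpose_mul, transpose_transpose] using congrArg transpose hHA
  refine admisSet_subset_admisSet ?E ?F htr ?G <;>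
    rw [transpose_smul, smul_mul_smul_one_mul_smul hsr]
  case E =>
    calc K * Kᵀ = K * Mᵀ * (M * Kᵀ) := by
          rw [Matrix.mul_assoc K, ← Matrix.mul_assoc Mᵀ, hM, Matrix.one_mul]
      _ = H * (A * Aᵀ) * Hᵀ := by
          rw [← hHA, ← hHA']
          simp only [Matrix.mul_assoc]
  case F =>
    rw [transpose_mul, transpose_mul, ← Matrix.mul_assoc, ← Matrix.mul_assoc, ← hHA]
    simp only [Matrix.mul_assoc]
  case G =>
    have h := (posSemidef_one_sub_mul_conjTranspose hM).mul_mul_conjTranspose_same (Xd * A)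
    simp only [conjTranspose_eq_transpose_of_trivial] at h
    convert h using 1
    simp only [transpose_mul, Matrix.mul_sub, Matrix.sub_mul, Matrix.mul_one, Matrix.mul_assoc]

theorem stmt0_general (n_x n_u n : ℕ) (hx : 0 < n_x)
    (hn : n_x + n_u ≤ n) (δ : ℝ)
    (H : Matrix (Fin (n_x + n_u)) (Fin n) ℝ) (Xd : Matrix (Fin n_x) (Fin n) ℝ)
    (l : Fin n → ℝ) (hl : ∀ i, 0 ≤ l i)
    (hpd : (H * Matrix.diagonal l * Hᵀ).PosDef)
    (U : Matrix (Fin (n_x + n_u)) (Fin (n_x + n_u)) ℝ)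
    (V : Matrix (Fin n) (Fin n) ℝ) (hV : Vᵀ * V = 1)
    (σ : Fin (n_x + n_u) → ℝ) (hσ : ∀ i, 0 ≤ σ i)
    (S : Matrix (Fin (n_x + n_u)) (Fin n) ℝ)
    (hS : S = Matrix.of fun (i : Fin (n_x + n_u)) (j : Fin n) =>
      if (j : ℕ) = (i : ℕ) then σ i else 0)
    (hSVD : H * Matrix.diagonal (fun i => Real.sqrt (l i)) = U * S * Vᵀ)
    (Ssq : Matrix (Fin (n_x + n_u)) (Fin (n_x + n_u)) ℝ)
    (hSsqPSD : Ssq.PosSemidef) (hSsq : Ssq * Ssq = S * Sᵀ) :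
    admisSet n_x (n_x + n_u) δ H Xd (Matrix.diagonal l) ⊆
      admisSet n_x (n_x + n_u) δ
        (Real.sqrt (((n_x + n_u : ℕ) : ℝ) / Matrix.trace (Matrix.diagonal l)) • (U * Ssq))
        (Real.sqrt (((n_x + n_u : ℕ) : ℝ) / Matrix.trace (Matrix.diagonal l)) •
          (Xd * Matrix.diagonal (fun i => Real.sqrt (l i)) * V *
            Matrix.of fun (i : Fin n) (j : Fin (n_x + n_u)) =>
              if (i : ℕ) = (j : ℕ) then (1 : ℝ) else 0))
        ((Matrix.trace (Matrix.diagonal l) / ((n_x + n_u : ℕ) : ℝ)) • 1) := by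
  have : Nonempty (Fin (n_x + n_u)) := ⟨⟨0, by omega⟩⟩
  set c : ℝ := ((n_x + n_u : ℕ) : ℝ)
  set t := trace (diagonal l)
  set P := rectId n (n_x + n_u) ℝ
  have hc : 0 < c := by positivity
  have ht : 0 < t := by
    simpa only [t, trace_diagonal] using sum_pos_of_posDef_mul_diagonal_mul_transpose hl hpd
  have hP : Pᵀ * P = 1 := rectId_transpose_mul_self hn
  have hS' : S = diagonal σ * Pᵀ := by rw [hS, diagonal_mul_rectId_transpose]
  have hSsq' : Ssq = diagonal σ := by
    refine hSsqPSD.eq_of_mul_self_eq (posSemidef_diagonal_iff.mpr hσ) ?_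
    rw [hSsq, hS', transpose_mul, transpose_transpose, diagonal_transpose, Matrix.mul_assoc,
      ← Matrix.mul_assoc Pᵀ, hP, Matrix.one_mul]
  have hΛ : diagonal l = diagonal (fun i => √(l i)) * (diagonal fun i => √(l i))ᵀ := by
    rw [diagonal_transpose, diagonal_mul_diagonal]
    exact congrArg diagonal (funext fun i => (Real.mul_self_sqrt (hl i)).symm)
  have hM : (V * P)ᵀ * (V * P) = 1 := by
    rw [transpose_mul, Matrix.mul_assoc, ← Matrix.mul_assoc Vᵀ, hV, Matrix.one_mul, hP]
  have hHA : H * diagonal (fun i => √(l i)) = U * Ssq * (V * P)ᵀ := by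
    rw [hSVD, hSsq', hS', transpose_mul]
    simp only [Matrix.mul_assoc]
  have hsr : √(c / t) * (t / c) * √(c / t) = 1 := by
    rw [mul_right_comm, Real.mul_self_sqrt (by positivity)]
    field_simp
  have htr : trace ((t / c) • (1 : Matrix (Fin (n_x + n_u)) (Fin (n_x + n_u)) ℝ)) = t := by
    rw [trace_smul, trace_one, Fintype.card_fin, smul_eq_mul]
    exact div_mul_cancel₀ t hc.ne'
  simpa only [Matrix.mul_assoc, P, rectId] using
    admisSet_subset_of_isometry_factorization (δ := δ) (Xd := Xd) hΛ hM hHA hsr htr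

/-- Let the dataset `(H, Ẋ, Λ)` (with `n ≥ n_h`, `HΛHᵀ ≻ 0`) be generated by a
true system `Δ_r`. Let `HΛ^{1/2} = USVᵀ` be a singular value decomposition (`U`, `V`
orthogonal, `S` rectangular diagonal with nonnegative singular values `σ`), and let `Ssq`
be the positive semidefinite square root of `SSᵀ`. Define
`H_s := (n_h/tr(Λ))^{1/2} U Ssq` and `Ẋ_s := (n_h/tr(Λ))^{1/2} Ẋ Λ^{1/2} V [I_{n_h} 0]ᵀ`.
Then `C(H, Ẋ, Λ) ⊆ C(H_s, Ẋ_s, (tr(Λ)/n_h) I_{n_h})`. -/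
theorem stmt0 (n_x n_u n : ℕ) (hx : 0 < n_x) (hu : 0 < n_u)
    (hn : n_x + n_u ≤ n) (δ : ℝ) (hδ : 0 < δ)
    (H : Matrix (Fin (n_x + n_u)) (Fin n) ℝ) (Xd : Matrix (Fin n_x) (Fin n) ℝ)
    (l : Fin n → ℝ) (hl : ∀ i, 0 ≤ l i)
    (hpd : (H * Matrix.diagonal l * Hᵀ).PosDef)
    (Δr : Matrix (Fin n_x) (Fin (n_x + n_u)) ℝ) (W : Matrix (Fin n_x) (Fin n) ℝ)
    (hgen : Xd = Δr * H + W) (hW : ∀ j, (∑ i, (W i j) ^ 2) < δ)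
    (U : Matrix (Fin (n_x + n_u)) (Fin (n_x + n_u)) ℝ)
    (hU : Uᵀ * U = 1) (hU' : U * Uᵀ = 1)
    (V : Matrix (Fin n) (Fin n) ℝ) (hV : Vᵀ * V = 1) (hV' : V * Vᵀ = 1)
    (σ : Fin (n_x + n_u) → ℝ) (hσ : ∀ i, 0 ≤ σ i)
    (S : Matrix (Fin (n_x + n_u)) (Fin n) ℝ)
    (hS : S = Matrix.of fun (i : Fin (n_x + n_u)) (j : Fin n) =>
      if (j : ℕ) = (i : ℕ) then σ i else 0)
    (hSVD : H * Matrix.diagonal (fun i => Real.sqrt (l i)) = U * S * Vᵀ)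
    (Ssq : Matrix (Fin (n_x + n_u)) (Fin (n_x + n_u)) ℝ)
    (hSsqPSD : Ssq.PosSemidef) (hSsq : Ssq * Ssq = S * Sᵀ) :
    admisSet n_x (n_x + n_u) δ H Xd (Matrix.diagonal l) ⊆
      admisSet n_x (n_x + n_u) δ
        (Real.sqrt (((n_x + n_u : ℕ) : ℝ) / Matrix.trace (Matrix.diagonal l)) • (U * Ssq))
        (Real.sqrt (((n_x + n_u : ℕ) : ℝ) / Matrix.trace (Matrix.diagonal l)) •
          (Xd * Matrix.diagonal (fun i => Real.sqrt (l i)) * V *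
            Matrix.of fun (i : Fin n) (j : Fin (n_x + n_u)) =>
              if (i : ℕ) = (j : ℕ) then (1 : ℝ) else 0))
        ((Matrix.trace (Matrix.diagonal l) / ((n_x + n_u : ℕ) : ℝ)) • 1) :=
  stmt0_general n_x n_u n hx hn δ H Xd l hl hpd U V hV σ hσ S hS hSVD Ssq hSsqPSD hSsq
end

section
/- Let (H, Ẋ, Λ) be a dataset with HΛH⊤ ≻ 0, suppose n_h ≥ 2, fix x ∈ ℝ^{n_x} and a nonempty set 𝒰_o ⊆ ℝ^{n_u}. For u ∈ 𝒰_o write h(u) := [x; u] ∈ ℝ^{n_h}, H_+(u) := [H h(u)], and for λ > 0 write Λ_+(λ) := diag(Λ, λ). Then there exist λ > 0 and u ∈ 𝒰_o such that μ̂(H_+(u), Λ_+(λ)) < μ̂(H, Λ) if and only if there exists u ∈ 𝒰_o such that h(u)⊤ (HΛH⊤)^{−1} h(u) > n_h / tr(Λ). -/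
open Matrix

/-- The volume bound `μ̂(H,Λ) := β (tr(Λ)δ)^{n_x n_h/2} det(HΛHᵀ)^{−n_x/2}`, where
`n_h` is the number of rows of `H`. -/
noncomputable def muhat {m k : Type*} [Fintype m] [Fintype k] [DecidableEq m]
    (n_x : ℕ) (β δ : ℝ) (H : Matrix m k ℝ) (Λ : Matrix k k ℝ) : ℝ :=
  β * (Matrix.trace Λ * δ) ^ ((n_x * Fintype.card m : ℝ) / 2) *
    (H * Λ * Hᵀ).det ^ (-(n_x : ℝ) / 2)

/-!
Appending the column `h` with weight `λ` is the rank-one update `HΛHᵀ + λ h hᵀ`, so by the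
matrix determinant lemma it multiplies the determinant by `1 + λ s` with `s = hᵀ (HΛHᵀ)⁻¹ h ≥ 0`,
while the trace `t` becomes `t + λ`. Hence `μ̂` decreases iff `(t + λ)^{n_h} < t^{n_h} (1 + λ s)`.
Bernoulli's inequality shows that this forces `s > n_h / t`. Conversely, if `s > n_h / t` then
`t^{n_h} (1 + λ s) - (t + λ)^{n_h}` vanishes at `λ = 0` with positive derivative, so it is
positive for small `λ > 0`.
-/

theorem exists_pos_one_add_pow_lt_one_add_mul_iff (m : ℕ) (c : ℝ) :
    (∃ y > 0, (1 + y) ^ m < 1 + c * y) ↔ (m : ℝ) < c := by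
  constructor
  · rintro ⟨y, hy, hlt⟩
    have hbernoulli := one_add_mul_le_pow (a := y) (by linarith) m
    nlinarith
  · intro hmc
    have hf : HasDerivAt (fun y => 1 + c * y - (1 + y) ^ m) (c - m) 0 := by
      simpa using ((hasDerivAt_id (0 : ℝ)).const_mul c |>.const_add 1).fun_sub
        ((hasDerivAt_id (0 : ℝ)).const_add 1 |>.fun_pow m)
    have hsign := eventually_nhdsWithin_sign_eq_of_deriv_pos (hf.deriv ▸ sub_pos.2 hmc)
      (by simp)
    obtain ⟨y, hy, hy0⟩ :=
      ((hsign.filter_mono (nhdsWithin_le_nhds (s := Set.Ioi 0))).and self_mem_nhdsWithin).exists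
    rw [sub_zero, sign_pos hy0, sign_eq_one_iff, sub_pos] at hy
    exact ⟨y, hy0, hy⟩

theorem exists_pos_add_pow_lt_pow_mul_iff {t : ℝ} (ht : 0 < t) (m : ℕ) (s : ℝ) :
    (∃ lam > 0, (t + lam) ^ m < t ^ m * (1 + lam * s)) ↔ (m : ℝ) / t < s := by
  have hscale (y : ℝ) :
      (t + t * y) ^ m < t ^ m * (1 + t * y * s) ↔ (1 + y) ^ m < 1 + t * s * y := by
    rw [show t + t * y = t * (1 + y) by ring, mul_pow, mul_lt_mul_iff_right₀ (pow_pos ht m)]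
    ring_nf
  rw [div_lt_iff₀' ht, ← exists_pos_one_add_pow_lt_one_add_mul_iff]
  constructor
  · rintro ⟨lam, hlam, h⟩
    refine ⟨lam / t, div_pos hlam ht, (hscale _).1 ?_⟩
    rwa [mul_div_cancel₀ _ ht.ne']
  · rintro ⟨y, hy, h⟩
    exact ⟨t * y, mul_pos ht hy, (hscale y).2 h⟩

section Muhat

variable {m k : Type*} [Fintype m] [Fintype k] [DecidableEq m]

theorem muhat_eq_mul_rpow (n_x : ℕ) (β : ℝ) {δ : ℝ} (hδ : 0 ≤ δ) (H : Matrix m k ℝ)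
    {Λ : Matrix k k ℝ} (hΛ : 0 ≤ trace Λ) (hdet : 0 ≤ (H * Λ * Hᵀ).det) :
    muhat n_x β δ H Λ = β * δ ^ ((n_x * Fintype.card m : ℝ) / 2) *
      (trace Λ ^ Fintype.card m / (H * Λ * Hᵀ).det) ^ ((n_x : ℝ) / 2) := by
  rw [muhat, Real.mul_rpow hΛ hδ, Real.div_rpow (by positivity) hdet, neg_div,
    Real.rpow_neg hdet, mul_comm (n_x : ℝ), mul_div_assoc, Real.rpow_natCast_mul hΛ]
  ring

theorem muhat_lt_muhat_iff {n_x : ℕ} (hx : 0 < n_x) {β δ : ℝ} (hβ : 0 < β) (hδ : 0 < δ)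
    {k' : Type*} [Fintype k'] {H : Matrix m k ℝ} {Λ : Matrix k k ℝ} {H' : Matrix m k' ℝ}
    {Λ' : Matrix k' k' ℝ} (hΛ : 0 ≤ trace Λ) (hΛ' : 0 ≤ trace Λ')
    (hdet : 0 < (H * Λ * Hᵀ).det) (hdet' : 0 < (H' * Λ' * H'ᵀ).det) :
    muhat n_x β δ H' Λ' < muhat n_x β δ H Λ ↔
      trace Λ' ^ Fintype.card m / (H' * Λ' * H'ᵀ).det <
        trace Λ ^ Fintype.card m / (H * Λ * Hᵀ).det := by
  rw [muhat_eq_mul_rpow n_x β hδ.le H' hΛ' hdet'.le, muhat_eq_mul_rpow n_x β hδ.le H hΛ hdet.le,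
    mul_lt_mul_iff_right₀ (by positivity)]
  exact Real.rpow_lt_rpow_iff (by positivity) (by positivity) (by positivity)

end Muhat

section AppendColumn

variable {R : Type*} [CommRing R] {m k : Type*} [Fintype k] [DecidableEq k]

theorem fromCols_replicateCol_mul_diagonal_mul_transpose (H : Matrix m k R) (v : m → R)
    (l : k → R) (lam : R) :
    fromCols H (replicateCol Unit v) * diagonal (Sum.elim l fun _ : Unit => lam) *
        (fromCols H (replicateCol Unit v))ᵀ =
      H * diagonal l * Hᵀ + replicateCol Unit v * replicateRow Unit (lam • v) := by
  rw [← fromBlocks_diagonal, fromCols_mul_fromBlocks, transpose_fromCols, fromCols_mul_fromRows,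
    transpose_replicateCol, ← smul_one_eq_diagonal]
  simp only [Matrix.mul_zero, add_zero, Matrix.mul_smul, Matrix.mul_one, zero_add, smul_mul,
    replicateRow_smul]

theorem trace_diagonal_sum_elim (l : k → R) (lam : R) :
    trace (diagonal (Sum.elim l fun _ : Unit => lam)) = trace (diagonal l) + lam := by
  simp [Fintype.sum_sum_type]

theorem trace_diagonal_pos_of_posDef [Nonempty m] {H : Matrix m k ℝ} {l : k → ℝ}
    (hl : ∀ i, 0 ≤ l i) (hpd : (H * diagonal l * Hᵀ).PosDef) : 0 < trace (diagonal l) := by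
  rw [trace_diagonal]
  refine (Finset.sum_nonneg fun i _ => hl i).lt_of_ne fun h => ?_
  have hl0 : l = 0 := funext fun i =>
    (Finset.sum_eq_zero_iff_of_nonneg fun i _ => hl i).1 h.symm i (Finset.mem_univ i)
  have := hpd.diag_pos (i := Classical.arbitrary m)
  simp [hl0] at this

variable [Fintype m] [DecidableEq m]

theorem det_add_replicateCol_mul_replicateRow_eq_mul_one_add_dotProduct {ι : Type*} [Unique ι]
    {A : Matrix m m R} (hA : IsUnit A.det) (u v : m → R) :
    (A + replicateCol ι u * replicateRow ι v).det = A.det * (1 + v ⬝ᵥ A⁻¹ *ᵥ u) := by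
  rw [det_add_replicateCol_mul_replicateRow hA, Matrix.mul_assoc, ← replicateCol_mulVec,
    det_unique (1 + _), Matrix.add_apply, one_apply_eq, replicateRow_mul_replicateCol_apply]

theorem muhat_fromCols_lt_muhat_iff {n_x : ℕ} (hx : 0 < n_x) {β δ : ℝ} (hβ : 0 < β)
    (hδ : 0 < δ) {H : Matrix m k ℝ} {l : k → ℝ} (ht : 0 < trace (diagonal l))
    (hpd : (H * diagonal l * Hᵀ).PosDef) (v : m → ℝ) {lam : ℝ} (hlam : 0 < lam) :
    muhat n_x β δ (fromCols H (replicateCol Unit v)) (diagonal (Sum.elim l fun _ : Unit => lam)) <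
        muhat n_x β δ H (diagonal l) ↔
      (trace (diagonal l) + lam) ^ Fintype.card m <
        trace (diagonal l) ^ Fintype.card m * (1 + lam * (v ⬝ᵥ (H * diagonal l * Hᵀ)⁻¹ *ᵥ v)) := by
  set A := H * diagonal l * Hᵀ
  have hdet : 0 < A.det := hpd.det_pos
  have hdet' : (fromCols H (replicateCol Unit v) * diagonal (Sum.elim l fun _ : Unit => lam) *
      (fromCols H (replicateCol Unit v))ᵀ).det = A.det * (1 + lam * (v ⬝ᵥ A⁻¹ *ᵥ v)) := by
    rw [fromCols_replicateCol_mul_diagonal_mul_transpose,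
      det_add_replicateCol_mul_replicateRow_eq_mul_one_add_dotProduct hdet.ne'.isUnit,
      smul_dotProduct, smul_eq_mul]
  have hgain : 0 < 1 + lam * (v ⬝ᵥ A⁻¹ *ᵥ v) := by
    have hq : 0 ≤ v ⬝ᵥ A⁻¹ *ᵥ v := by simpa using hpd.inv.posSemidef.dotProduct_mulVec_nonneg v
    exact add_pos_of_pos_of_nonneg one_pos (mul_nonneg hlam.le hq)
  rw [muhat_lt_muhat_iff hx hβ hδ ht.le (by rw [trace_diagonal_sum_elim]; positivity) hdet
      (hdet' ▸ mul_pos hdet hgain), hdet', trace_diagonal_sum_elim,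
    div_lt_div_iff₀ (by positivity) hdet, mul_comm _ A.det, mul_left_comm,
    mul_lt_mul_iff_right₀ hdet]

end AppendColumn

theorem stmt2_general (n_x n_u n : ℕ) (hx : 0 < n_x)
    (β δ : ℝ) (hβ : 0 < β) (hδ : 0 < δ)
    (H : Matrix (Fin n_x ⊕ Fin n_u) (Fin n) ℝ)
    (l : Fin n → ℝ) (hl : ∀ i, 0 ≤ l i)
    (hpd : (H * Matrix.diagonal l * Hᵀ).PosDef)
    (x : Fin n_x → ℝ) (Uo : Set (Fin n_u → ℝ)) :
    (∃ lam : ℝ, 0 < lam ∧ ∃ u ∈ Uo,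
        muhat n_x β δ
          (Matrix.fromCols H (Matrix.of fun i (_ : Unit) => Sum.elim x u i))
          (Matrix.diagonal (Sum.elim l fun _ : Unit => lam)) <
        muhat n_x β δ H (Matrix.diagonal l)) ↔
      ∃ u ∈ Uo,
        Sum.elim x u ⬝ᵥ (H * Matrix.diagonal l * Hᵀ)⁻¹.mulVec (Sum.elim x u) >
          ((n_x + n_u : ℕ) : ℝ) / Matrix.trace (Matrix.diagonal l) := by
  have : Nonempty (Fin n_x) := Fin.pos_iff_nonempty.1 hx
  have ht := trace_diagonal_pos_of_posDef hl hpd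
  have hcard : Fintype.card (Fin n_x ⊕ Fin n_u) = n_x + n_u := by simp
  have key (u : Fin n_u → ℝ) :
      (∃ lam > 0, muhat n_x β δ (fromCols H (replicateCol Unit (Sum.elim x u)))
          (diagonal (Sum.elim l fun _ : Unit => lam)) < muhat n_x β δ H (diagonal l)) ↔
        ((n_x + n_u : ℕ) : ℝ) / trace (diagonal l) <
          Sum.elim x u ⬝ᵥ (H * diagonal l * Hᵀ)⁻¹ *ᵥ Sum.elim x u := by
    rw [← exists_pos_add_pow_lt_pow_mul_iff ht, ← hcard]
    exact exists_congr fun lam => and_congr_right fun hlam =>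
      muhat_fromCols_lt_muhat_iff hx hβ hδ ht hpd _ hlam
  constructor
  · rintro ⟨lam, hlam, u, hu, hlt⟩
    exact ⟨u, hu, (key u).1 ⟨lam, hlam, hlt⟩⟩
  · rintro ⟨u, hu, hgt⟩
    obtain ⟨lam, hlam, hlt⟩ := (key u).2 hgt
    exact ⟨lam, hlam, u, hu, hlt⟩

/-- With `HΛHᵀ ≻ 0`, `x ∈ ℝ^{n_x}`, `𝒰_o ⊆ ℝ^{n_u}` nonempty, and
`h(u) = [x; u]`, `H₊(u) = [H h(u)]`, `Λ₊(λ) = diag(Λ, λ)`: there exist `λ > 0` and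
`u ∈ 𝒰_o` with `μ̂(H₊(u), Λ₊(λ)) < μ̂(H, Λ)` iff there exists `u ∈ 𝒰_o` with
`h(u)ᵀ (HΛHᵀ)⁻¹ h(u) > n_h / tr(Λ)`. (Rows of `H` are indexed by `Fin n_x ⊕ Fin n_u`,
so that `n_h = n_x + n_u ≥ 2`.) -/
theorem stmt2 (n_x n_u n : ℕ) (hx : 0 < n_x) (hu : 0 < n_u) (hn : 0 < n)
    (β δ : ℝ) (hβ : 0 < β) (hδ : 0 < δ)
    (H : Matrix (Fin n_x ⊕ Fin n_u) (Fin n) ℝ)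
    (l : Fin n → ℝ) (hl : ∀ i, 0 ≤ l i)
    (hpd : (H * Matrix.diagonal l * Hᵀ).PosDef)
    (x : Fin n_x → ℝ) (Uo : Set (Fin n_u → ℝ)) (hUo : Uo.Nonempty) :
    (∃ lam : ℝ, 0 < lam ∧ ∃ u ∈ Uo,
        muhat n_x β δ
          (Matrix.fromCols H (Matrix.of fun i (_ : Unit) => Sum.elim x u i))
          (Matrix.diagonal (Sum.elim l fun _ : Unit => lam)) <
        muhat n_x β δ H (Matrix.diagonal l)) ↔
      ∃ u ∈ Uo,
        Sum.elim x u ⬝ᵥ (H * Matrix.diagonal l * Hᵀ)⁻¹.mulVec (Sum.elim x u) >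
          ((n_x + n_u : ℕ) : ℝ) / Matrix.trace (Matrix.diagonal l) :=
  stmt2_general n_x n_u n hx β δ hβ hδ H l hl hpd x Uo
end

section
/- Let (h_i, ẋ_i), i = 1,…,n, be data samples with h_i ∈ ℝ^{n_h}, ẋ_i ∈ ℝ^{n_x}, generated by a true system Δ_r ∈ ℝ^{n_x×n_h}: ẋ_i = Δ_r h_i + w_i with w_i⊤ w_i < δ for all i. Let Ξ := Σ_{i=1}^{n−1} λ'_i ξ(h_i, ẋ_i) for some λ'_1,…,λ'_{n−1} ≥ 0. Suppose λ_1,…,λ_n ≥ 0 and σ⁺ ≥ 0 satisfy Ξ − Σ_{i=1}^{n} λ_i ξ(h_i, ẋ_i) ⪰ σ⁺ · diag(I_{n_x}, 0_{n_h}), and suppose there exists α ≥ 0 with ξ(h_n, ẋ_n) − α Ξ ⪰ 0. Then there exist μ_1,…,μ_{n−1} ≥ 0 and σ ≥ σ⁺ such that Ξ − Σ_{i=1}^{n−1} μ_i ξ(h_i, ẋ_i) ⪰ σ · diag(I_{n_x}, 0_{n_h}). (Thus a data sample for which the learning criterion holds can be discarded without decreasing the achievable value of σ.) -/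
open Matrix

/-- The data-sample matrix
`ξ(h, ẋ) := [[δ I_{n_x} − ẋẋᵀ, ẋhᵀ],[hẋᵀ, −hhᵀ]]`. -/
noncomputable def xiMat (n_x n_h : ℕ) (δ : ℝ) (h : Fin n_h → ℝ) (xd : Fin n_x → ℝ) :
    Matrix (Fin n_x ⊕ Fin n_h) (Fin n_x ⊕ Fin n_h) ℝ :=
  Matrix.fromBlocks (δ • 1 - vecMulVec xd xd) (vecMulVec xd h)
    (vecMulVec h xd) (-(vecMulVec h h))

/-! Since `ξₙ − αΞ ⪰ 0` and `Ξ` is a nonnegative combination of `ξ₀, …, ξₙ₋₁`, the term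
`λₙ ξₙ` can be traded for `λₙ α Ξ` without leaving the cone: the multipliers
`μᵢ := λᵢ + λₙ α λ'ᵢ` of the first `n` samples certify the same `σ⁺`. -/

theorem Fin.sum_castSucc_add_mul_smul {R M : Type*} [CommRing R] [AddCommGroup M] [Module R M]
    {n : ℕ} (ξ : Fin (n + 1) → M) (l : Fin (n + 1) → R) (c : R) (l' : Fin n → R) :
    ∑ i : Fin n, (l i.castSucc + c * l' i) • ξ i.castSucc =
      ∑ i, l i • ξ i - l (Fin.last n) • ξ (Fin.last n) +
        c • ∑ i : Fin n, l' i • ξ i.castSucc := by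
  simp only [Fin.sum_univ_castSucc, add_smul, Finset.sum_add_distrib, Finset.smul_sum, mul_smul,
    add_sub_cancel_right]

theorem Matrix.PosSemidef.sub_sum_castSucc_of_sub_smul_last
    {R m : Type*} [CommRing R] [PartialOrder R] [StarRing R] [StarOrderedRing R] [Fintype m]
    {n : ℕ} (ξ : Fin (n + 1) → Matrix m m R) (l' : Fin n → R) (Ξ : Matrix m m R)
    (hΞ : Ξ = ∑ i : Fin n, l' i • ξ i.castSucc) (l : Fin (n + 1) → R)
    (hl : 0 ≤ l (Fin.last n)) (α : R) (D : Matrix m m R)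
    (hconstr : (Ξ - ∑ i, l i • ξ i - D).PosSemidef)
    (hcrit : (ξ (Fin.last n) - α • Ξ).PosSemidef) :
    (Ξ - ∑ i : Fin n, (l i.castSucc + l (Fin.last n) * α * l' i) • ξ i.castSucc -
      D).PosSemidef := by
  have hsplit :
      Ξ - ∑ i : Fin n, (l i.castSucc + l (Fin.last n) * α * l' i) • ξ i.castSucc - D =
      (Ξ - ∑ i, l i • ξ i - D) + l (Fin.last n) • (ξ (Fin.last n) - α • Ξ) := by
    rw [Fin.sum_castSucc_add_mul_smul, ← hΞ, smul_sub, mul_smul]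
    abel
  rw [hsplit]
  exact hconstr.add (hcrit.smul hl)

theorem stmt4_general (n_x n_u n : ℕ)
    (δ : ℝ)
    (h : Fin (n + 1) → Fin (n_x + n_u) → ℝ) (xd : Fin (n + 1) → Fin n_x → ℝ)
    (l' : Fin n → ℝ) (hl' : ∀ i, 0 ≤ l' i)
    (Ξ : Matrix (Fin n_x ⊕ Fin (n_x + n_u)) (Fin n_x ⊕ Fin (n_x + n_u)) ℝ)
    (hΞ : Ξ = ∑ i : Fin n, l' i • xiMat n_x (n_x + n_u) δ (h i.castSucc) (xd i.castSucc))
    (l : Fin (n + 1) → ℝ) (hl : ∀ i, 0 ≤ l i)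
    (σp : ℝ)
    (hconstr : (Ξ - (∑ i : Fin (n + 1), l i • xiMat n_x (n_x + n_u) δ (h i) (xd i)) -
        σp • Matrix.fromBlocks 1 0 0 0).PosSemidef)
    (α : ℝ) (hα : 0 ≤ α)
    (hcrit : (xiMat n_x (n_x + n_u) δ (h (Fin.last n)) (xd (Fin.last n)) -
        α • Ξ).PosSemidef) :
    ∃ (μ : Fin n → ℝ) (σ : ℝ), (∀ i, 0 ≤ μ i) ∧ σp ≤ σ ∧
      (Ξ - (∑ i : Fin n, μ i • xiMat n_x (n_x + n_u) δ (h i.castSucc) (xd i.castSucc)) -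
        σ • Matrix.fromBlocks 1 0 0 0).PosSemidef := by
  exact ⟨fun i => l i.castSucc + l (Fin.last n) * α * l' i, σp,
    fun i => add_nonneg (hl _) (mul_nonneg (mul_nonneg (hl _) hα) (hl' i)), le_rfl,
    PosSemidef.sub_sum_castSucc_of_sub_smul_last (fun i => xiMat n_x (n_x + n_u) δ (h i) (xd i))
      l' Ξ hΞ l (hl _) α _ hconstr hcrit⟩

/-- Data samples `(hᵢ, ẋᵢ)`, `i = 0,…,n` (so `n+1` samples, the paper's
`i = 1,…,n` with `n ≥ 1`), are generated by a true system `Δ_r` with disturbances bounded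
by `δ`. Let `Ξ := Σ_{i<n} λ'ᵢ ξ(hᵢ, ẋᵢ)` (the first `n` samples) with `λ'ᵢ ≥ 0`.
If `λᵢ ≥ 0` and `σ⁺ ≥ 0` satisfy `Ξ − Σᵢ λᵢ ξ(hᵢ, ẋᵢ) ⪰ σ⁺ diag(I, 0)` (sum over all
`n+1` samples), and there is `α ≥ 0` with `ξ(h_last, ẋ_last) − αΞ ⪰ 0`, then there exist
`μᵢ ≥ 0` (over the first `n` samples) and `σ ≥ σ⁺` with
`Ξ − Σᵢ μᵢ ξ(hᵢ, ẋᵢ) ⪰ σ diag(I, 0)`. -/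
theorem stmt4 (n_x n_u n : ℕ) (hx : 0 < n_x) (hu : 0 < n_u)
    (δ : ℝ) (hδ : 0 < δ)
    (h : Fin (n + 1) → Fin (n_x + n_u) → ℝ) (xd : Fin (n + 1) → Fin n_x → ℝ)
    (Δr : Matrix (Fin n_x) (Fin (n_x + n_u)) ℝ)
    (w : Fin (n + 1) → Fin n_x → ℝ)
    (hgen : ∀ i, xd i = Δr.mulVec (h i) + w i)
    (hw : ∀ i, w i ⬝ᵥ w i < δ)
    (l' : Fin n → ℝ) (hl' : ∀ i, 0 ≤ l' i)
    (Ξ : Matrix (Fin n_x ⊕ Fin (n_x + n_u)) (Fin n_x ⊕ Fin (n_x + n_u)) ℝ)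
    (hΞ : Ξ = ∑ i : Fin n, l' i • xiMat n_x (n_x + n_u) δ (h i.castSucc) (xd i.castSucc))
    (l : Fin (n + 1) → ℝ) (hl : ∀ i, 0 ≤ l i)
    (σp : ℝ) (hσp : 0 ≤ σp)
    (hconstr : (Ξ - (∑ i : Fin (n + 1), l i • xiMat n_x (n_x + n_u) δ (h i) (xd i)) -
        σp • Matrix.fromBlocks 1 0 0 0).PosSemidef)
    (α : ℝ) (hα : 0 ≤ α)
    (hcrit : (xiMat n_x (n_x + n_u) δ (h (Fin.last n)) (xd (Fin.last n)) -
        α • Ξ).PosSemidef) :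
    ∃ (μ : Fin n → ℝ) (σ : ℝ), (∀ i, 0 ≤ μ i) ∧ σp ≤ σ ∧
      (Ξ - (∑ i : Fin n, μ i • xiMat n_x (n_x + n_u) δ (h i.castSucc) (xd i.castSucc)) -
        σ • Matrix.fromBlocks 1 0 0 0).PosSemidef :=
  stmt4_general n_x n_u n δ h xd l' hl' Ξ hΞ l hl σp hconstr α hα hcrit
end

section
/- For all positive integers p and q there exists a constant β_m > 0, depending only on p and q, such that for every matrix ellipsoid ℰ ⊆ ℝ^{p×q} with parameters (E, F, G), the Lebesgue measure of the vectorized set 𝒱(ℰ) := {vec(Z) : Z ∈ ℰ} ⊆ ℝ^{pq} equals β_m · (det(F⊤E^{−1}F − G))^{p/2} · (det(E^{−1}))^{q/2}; in particular every matrix ellipsoid is measurable in this sense. -/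
/-!
Completing the square, `Z` lies in the ellipsoid iff `(Z + E⁻¹F)ᵀ E (Z + E⁻¹F) ⪯ H` with
`H = FᵀE⁻¹F - G`. Factoring `E = AᵀA` and `H = BᵀB` with `A`, `B` invertible, the affine map
`W ↦ A⁻¹ W B - E⁻¹F` carries the matrix unit ball `{W : WᵀW ⪯ 1}` onto the ellipsoid. After
vectorization its linear part is `Bᵀ ⊗ A⁻¹`, whose determinant has absolute value
`|det A⁻¹|^q |det B|^p = det(E⁻¹)^{q/2} det(H)^{p/2}`. So `β_m` is the volume of the vectorized
unit ball, which is positive and finite: it contains a Euclidean ball and lies in a cube.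
-/

open Matrix MeasureTheory

/-- Column-stacking vectorization: `vecMat Z (i + p*j) = Z i j`. -/
def vecMat {p q : ℕ} (Z : Matrix (Fin p) (Fin q) ℝ) : Fin (p * q) → ℝ :=
  fun k =>
    have hp : 0 < p := by
      rcases Nat.eq_zero_or_pos p with hp0 | hp0
      · exact absurd k.isLt (by simp [hp0])
      · exact hp0
    Z ⟨(k : ℕ) % p, Nat.mod_lt _ hp⟩
      ⟨(k : ℕ) / p, by
        rw [Nat.div_lt_iff_lt_mul hp]
        exact lt_of_lt_of_le k.isLt (le_of_eq (Nat.mul_comm p q))⟩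

open scoped Pointwise

section Vectorization

variable {p q : ℕ}

-- `(i, j) ↦ i + p * j`
def vecIndex (p q : ℕ) : Fin p × Fin q ≃ Fin (p * q) :=
  (Equiv.prodComm (Fin p) (Fin q)).trans (finProdFinEquiv.trans (finCongr (Nat.mul_comm q p)))

lemma vecMat_vecIndex (Z : Matrix (Fin p) (Fin q) ℝ) (i : Fin p) (j : Fin q) :
    vecMat Z (vecIndex p q (i, j)) = Z i j := by
  have hp : 0 < p := i.pos
  have hidx : ((vecIndex p q (i, j) : Fin (p * q)) : ℕ) = i + p * j := rfl
  simp only [vecMat]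
  congr 2
  · rw [hidx, Nat.add_mul_mod_self_left, Nat.mod_eq_of_lt i.isLt]
  · rw [hidx, Nat.add_mul_div_left _ _ hp, Nat.div_eq_of_lt i.isLt, Nat.zero_add]

lemma vecMat_surjective : Function.Surjective (vecMat : Matrix (Fin p) (Fin q) ℝ → _) := by
  intro v
  refine ⟨Matrix.of fun i j => v (vecIndex p q (i, j)), funext fun k => ?_⟩
  obtain ⟨⟨i, j⟩, rfl⟩ := (vecIndex p q).surjective k
  rw [vecMat_vecIndex, Matrix.of_apply]

lemma sum_vecMat (f : ℝ → ℝ) (Z : Matrix (Fin p) (Fin q) ℝ) :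
    ∑ k, f (vecMat Z k) = ∑ i, ∑ j, f (Z i j) := by
  rw [← (vecIndex p q).sum_comp, Fintype.sum_prod_type]
  simp only [vecMat_vecIndex]

lemma vecMat_add (Z W : Matrix (Fin p) (Fin q) ℝ) : vecMat (Z + W) = vecMat Z + vecMat W := rfl

-- In column-stacking order this is the Kronecker product `Dᵀ ⊗ C`.
noncomputable def vecMulMulMatrix (C : Matrix (Fin p) (Fin p) ℝ) (D : Matrix (Fin q) (Fin q) ℝ) :
    Matrix (Fin (p * q)) (Fin (p * q)) ℝ :=
  Matrix.reindex (vecIndex p q) (vecIndex p q) (Matrix.kroneckerMap (· * ·) C Dᵀ)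

lemma vecMat_mul_mul (C : Matrix (Fin p) (Fin p) ℝ) (D : Matrix (Fin q) (Fin q) ℝ)
    (W : Matrix (Fin p) (Fin q) ℝ) :
    vecMat (C * W * D) = vecMulMulMatrix C D *ᵥ vecMat W := by
  funext k
  obtain ⟨⟨i, j⟩, rfl⟩ := (vecIndex p q).surjective k
  rw [vecMat_vecIndex, Matrix.mulVec, dotProduct, ← (vecIndex p q).sum_comp,
    Fintype.sum_prod_type]
  simp only [vecMulMulMatrix, Matrix.reindex_apply, Matrix.submatrix_apply,
    Equiv.symm_apply_apply, Matrix.kroneckerMap_apply, Matrix.transpose_apply, vecMat_vecIndex,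
    Matrix.mul_apply, Finset.sum_mul]
  rw [Finset.sum_comm]
  refine Finset.sum_congr rfl fun a _ => Finset.sum_congr rfl fun b _ => ?_
  ring

lemma det_vecMulMulMatrix (C : Matrix (Fin p) (Fin p) ℝ) (D : Matrix (Fin q) (Fin q) ℝ) :
    (vecMulMulMatrix C D).det = C.det ^ q * D.det ^ p := by
  rw [vecMulMulMatrix, Matrix.det_reindex_self, Matrix.det_kronecker, Matrix.det_transpose,
    Fintype.card_fin, Fintype.card_fin]

lemma image_vecMat_image_affine (C : Matrix (Fin p) (Fin p) ℝ) (D : Matrix (Fin q) (Fin q) ℝ)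
    (Z₀ : Matrix (Fin p) (Fin q) ℝ) (S : Set (Matrix (Fin p) (Fin q) ℝ)) :
    vecMat '' ((fun W => C * W * D + Z₀) '' S)
      = vecMat Z₀ +ᵥ Matrix.toLin' (vecMulMulMatrix C D) '' (vecMat '' S) := by
  rw [Set.image_image, ← Set.image_vadd, Set.image_image, Set.image_image]
  refine Set.image_congr fun W _ => ?_
  rw [vecMat_add, vecMat_mul_mul, Matrix.toLin'_apply, vadd_eq_add, add_comm]

lemma volume_image_vecMat_image_affine (C : Matrix (Fin p) (Fin p) ℝ)
    (D : Matrix (Fin q) (Fin q) ℝ) (Z₀ : Matrix (Fin p) (Fin q) ℝ)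
    (S : Set (Matrix (Fin p) (Fin q) ℝ)) :
    volume (vecMat '' ((fun W => C * W * D + Z₀) '' S))
      = ENNReal.ofReal |C.det ^ q * D.det ^ p| * volume (vecMat '' S) := by
  rw [image_vecMat_image_affine, measure_vadd, Measure.addHaar_image_linearMap,
    LinearMap.det_toLin', det_vecMulMulMatrix]

end Vectorization

section UnitBall

variable {p q : ℕ}

def matUnitBall (p q : ℕ) : Set (Matrix (Fin p) (Fin q) ℝ) := {W | (1 - Wᵀ * W).PosSemidef}

lemma mem_matUnitBall_iff {W : Matrix (Fin p) (Fin q) ℝ} :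
    W ∈ matUnitBall p q ↔ ∀ x : Fin q → ℝ, (W *ᵥ x) ⬝ᵥ (W *ᵥ x) ≤ x ⬝ᵥ x := by
  have hquad : ∀ x : Fin q → ℝ,
      x ⬝ᵥ ((1 - Wᵀ * W) *ᵥ x) = x ⬝ᵥ x - (W *ᵥ x) ⬝ᵥ (W *ᵥ x) := fun x => by
    rw [Matrix.sub_mulVec, dotProduct_sub, Matrix.one_mulVec, ← Matrix.mulVec_mulVec,
      Matrix.dotProduct_mulVec x Wᵀ, Matrix.vecMul_transpose]
  have hherm : (1 - Wᵀ * W).IsHermitian :=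
    Matrix.isHermitian_one.sub (by simpa using Matrix.isHermitian_conjTranspose_mul_self W)
  refine ⟨fun h x => ?_, fun h => .of_dotProduct_mulVec_nonneg hherm fun x => ?_⟩
  · have := h.dotProduct_mulVec_nonneg x
    rw [star_trivial, hquad] at this
    linarith
  · rw [star_trivial, hquad]
    linarith [h x]

lemma mem_matUnitBall_of_sum_sq_le_one {W : Matrix (Fin p) (Fin q) ℝ}
    (hW : ∑ i, ∑ j, W i j ^ 2 ≤ 1) : W ∈ matUnitBall p q := by
  rw [mem_matUnitBall_iff]
  intro x
  have hx : 0 ≤ x ⬝ᵥ x := by simpa using dotProduct_star_self_nonneg x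
  calc (W *ᵥ x) ⬝ᵥ (W *ᵥ x) = ∑ i, (∑ j, W i j * x j) ^ 2 := by
        simp only [dotProduct, Matrix.mulVec, sq]
    _ ≤ ∑ i, (∑ j, W i j ^ 2) * (x ⬝ᵥ x) := by
        refine Finset.sum_le_sum fun i _ => ?_
        simpa only [dotProduct, sq] using Finset.sum_mul_sq_le_sq_mul_sq _ (W i) x
    _ = (∑ i, ∑ j, W i j ^ 2) * (x ⬝ᵥ x) := (Finset.sum_mul ..).symm
    _ ≤ x ⬝ᵥ x := mul_le_of_le_one_left hx hW

lemma abs_le_one_of_mem_matUnitBall {W : Matrix (Fin p) (Fin q) ℝ} (hW : W ∈ matUnitBall p q)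
    (i : Fin p) (j : Fin q) : |W i j| ≤ 1 := by
  have hcol := mem_matUnitBall_iff.mp hW (Pi.single j 1)
  rw [Matrix.mulVec_single_one, dotProduct_single, Pi.single_eq_same, mul_one] at hcol
  rw [← sq_le_one_iff_abs_le_one]
  calc W i j ^ 2 ≤ ∑ i', W i' j ^ 2 :=
        Finset.single_le_sum (f := fun i' => W i' j ^ 2) (fun _ _ => sq_nonneg _)
          (Finset.mem_univ i)
    _ = W.col j ⬝ᵥ W.col j := by simp only [dotProduct, sq, Matrix.col_apply]
    _ ≤ 1 := hcol

lemma volume_image_vecMat_matUnitBall_pos : 0 < volume (vecMat '' matUnitBall p q) := by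
  have hopen : IsOpen {v : Fin (p * q) → ℝ | ∑ k, v k ^ 2 < 1} :=
    isOpen_lt (by fun_prop) continuous_const
  refine (hopen.measure_pos volume ⟨0, by simp⟩).trans_le (measure_mono ?_)
  intro v hv
  obtain ⟨W, rfl⟩ := vecMat_surjective v
  rw [Set.mem_ofPred_eq, sum_vecMat (· ^ 2)] at hv
  exact ⟨W, mem_matUnitBall_of_sum_sq_le_one hv.le, rfl⟩

lemma volume_image_vecMat_matUnitBall_lt_top : volume (vecMat '' matUnitBall p q) < ⊤ := by
  refine (measure_mono ?_).trans_lt (measure_closedBall_lt_top (x := 0) (r := 1))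
  rintro _ ⟨W, hW, rfl⟩
  rw [mem_closedBall_zero_iff, pi_norm_le_iff_of_nonneg zero_le_one]
  intro k
  obtain ⟨⟨i, j⟩, rfl⟩ := (vecIndex p q).surjective k
  rw [vecMat_vecIndex, Real.norm_eq_abs]
  exact abs_le_one_of_mem_matUnitBall hW i j

end UnitBall

section Ellipsoid

lemma neg_quadratic_eq_sub_transpose_mul_mul {R m n : Type*} [CommRing R] [Fintype m]
    [DecidableEq m] [Fintype n] {E : Matrix m m R} (hE : Eᵀ = E) (hEu : IsUnit E)
    (F Z : Matrix m n R) (G : Matrix n n R) :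
    -(Zᵀ * E * Z + Zᵀ * F + Fᵀ * Z + G)
      = (Fᵀ * E⁻¹ * F - G) - (Z + E⁻¹ * F)ᵀ * E * (Z + E⁻¹ * F) := by
  have hEdet : IsUnit E.det := (Matrix.isUnit_iff_isUnit_det E).mp hEu
  have hEinv : Fᵀ * E⁻¹ * E = Fᵀ := by
    rw [Matrix.mul_assoc, Matrix.nonsing_inv_mul _ hEdet, Matrix.mul_one]
  have hEinv' : Zᵀ * E * (E⁻¹ * F) = Zᵀ * F := by
    rw [Matrix.mul_assoc, ← Matrix.mul_assoc E, Matrix.mul_nonsing_inv _ hEdet, Matrix.one_mul]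
  rw [Matrix.transpose_add, Matrix.transpose_mul, Matrix.transpose_nonsing_inv, hE]
  simp only [Matrix.add_mul, Matrix.mul_add, hEinv, hEinv', ← Matrix.mul_assoc Fᵀ E⁻¹ F]
  abel

variable {p q : ℕ}

lemma posSemidef_sub_iff_mem_matUnitBall (A : Matrix (Fin p) (Fin p) ℝ)
    {B : Matrix (Fin q) (Fin q) ℝ} (hB : IsUnit B) (Y : Matrix (Fin p) (Fin q) ℝ) :
    (Bᵀ * B - Yᵀ * (Aᵀ * A) * Y).PosSemidef ↔ A * Y * B⁻¹ ∈ matUnitBall p q := by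
  have hBdet : IsUnit B.det := (Matrix.isUnit_iff_isUnit_det B).mp hB
  have hconj : star B⁻¹ * (Bᵀ * B - Yᵀ * (Aᵀ * A) * Y) * B⁻¹
      = 1 - (A * Y * B⁻¹)ᵀ * (A * Y * B⁻¹) := by
    rw [star_eq_conjTranspose, conjTranspose_eq_transpose_of_trivial, Matrix.mul_sub,
      Matrix.sub_mul]
    congr 1
    · rw [show B⁻¹ᵀ * (Bᵀ * B) * B⁻¹ = (B * B⁻¹)ᵀ * (B * B⁻¹) by
        simp only [Matrix.transpose_mul, Matrix.mul_assoc]]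
      rw [Matrix.mul_nonsing_inv _ hBdet, Matrix.transpose_one, Matrix.one_mul]
    · simp only [Matrix.transpose_mul, Matrix.mul_assoc]
  rw [← (Matrix.isUnit_nonsing_inv_iff.mpr hB).posSemidef_star_left_conjugate_iff, hconj]
  rfl

theorem setOf_posSemidef_neg_quadratic_eq_image {E : Matrix (Fin p) (Fin p) ℝ}
    (F : Matrix (Fin p) (Fin q) ℝ) (G : Matrix (Fin q) (Fin q) ℝ) {A : Matrix (Fin p) (Fin p) ℝ}
    {B : Matrix (Fin q) (Fin q) ℝ} (hA : IsUnit A) (hB : IsUnit B) (hEA : E = Aᵀ * A)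
    (hHB : Fᵀ * E⁻¹ * F - G = Bᵀ * B) :
    {Z | (-(Zᵀ * E * Z + Zᵀ * F + Fᵀ * Z + G)).PosSemidef}
      = (fun W => A⁻¹ * W * B + -(E⁻¹ * F)) '' matUnitBall p q := by
  have hAdet : IsUnit A.det := (Matrix.isUnit_iff_isUnit_det A).mp hA
  have hBdet : IsUnit B.det := (Matrix.isUnit_iff_isUnit_det B).mp hB
  have hE : Eᵀ = E := by rw [hEA, Matrix.transpose_mul, Matrix.transpose_transpose]
  have hEu : IsUnit E := hEA ▸ ((Matrix.isUnit_transpose A).mpr hA).mul hA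
  rw [Set.image_eq_preimage_of_inverse (g := fun Z => A * (Z + E⁻¹ * F) * B⁻¹)]
  · ext Z
    rw [Set.mem_ofPred_eq, Set.mem_preimage, neg_quadratic_eq_sub_transpose_mul_mul hE hEu, hHB,
      hEA, posSemidef_sub_iff_mem_matUnitBall A hB]
  · intro W
    simp only [neg_add_cancel_right, Matrix.mul_assoc, Matrix.mul_nonsing_inv_cancel_left _ _ hAdet,
      Matrix.mul_nonsing_inv _ hBdet, Matrix.mul_one]
  · intro Z
    simp only [add_neg_cancel_right, Matrix.mul_assoc, Matrix.nonsing_inv_mul_cancel_left _ _ hAdet,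
      Matrix.nonsing_inv_mul _ hBdet, Matrix.mul_one]

end Ellipsoid

open scoped MatrixOrder in
lemma Matrix.PosDef.exists_isUnit_eq_transpose_mul_self {n : Type*} [Fintype n] [DecidableEq n]
    {M : Matrix n n ℝ} (hM : M.PosDef) : ∃ B, IsUnit B ∧ M = Bᵀ * B := by
  obtain ⟨B, hB, rfl⟩ :=
    CStarAlgebra.isStrictlyPositive_iff_eq_star_mul_self.mp hM.isStrictlyPositive
  exact ⟨B, hB, by rw [star_eq_conjTranspose, conjTranspose_eq_transpose_of_trivial]⟩

lemma Matrix.det_transpose_mul_self {R n : Type*} [CommRing R] [Fintype n] [DecidableEq n]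
    (B : Matrix n n R) : (Bᵀ * B).det = B.det ^ 2 := by
  rw [Matrix.det_mul, Matrix.det_transpose, sq]

lemma Matrix.det_inv_transpose_mul_self {R n : Type*} [CommRing R] [Fintype n] [DecidableEq n]
    (A : Matrix n n R) : (Aᵀ * A)⁻¹.det = A⁻¹.det ^ 2 := by
  rw [Matrix.det_nonsing_inv, Matrix.det_nonsing_inv, Matrix.det_transpose_mul_self,
    Ring.inverse_pow]

lemma Real.sq_rpow_half (d : ℝ) (n : ℕ) : (d ^ 2) ^ ((n : ℝ) / 2) = |d| ^ n := by
  rw [← sq_abs, ← Real.rpow_natCast |d| 2, ← Real.rpow_mul (abs_nonneg d), ← Real.rpow_natCast]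
  congr 1
  push_cast
  ring

lemma exists_volume_image_vecMat_matUnitBall_eq_ofReal {p q : ℕ} :
    ∃ β : ℝ, 0 < β ∧ volume (vecMat '' matUnitBall p q) = ENNReal.ofReal β :=
  ⟨_, ENNReal.toReal_pos volume_image_vecMat_matUnitBall_pos.ne'
      volume_image_vecMat_matUnitBall_lt_top.ne,
    (ENNReal.ofReal_toReal volume_image_vecMat_matUnitBall_lt_top.ne).symm⟩

theorem stmt5_general (p q : ℕ) :
    ∃ βm : ℝ, 0 < βm ∧
      ∀ (E : Matrix (Fin p) (Fin p) ℝ) (F : Matrix (Fin p) (Fin q) ℝ)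
        (G : Matrix (Fin q) (Fin q) ℝ),
        G.IsHermitian → E.PosDef → (Fᵀ * E⁻¹ * F - G).PosDef →
        volume (vecMat ''
            {Z : Matrix (Fin p) (Fin q) ℝ |
              (-(Zᵀ * E * Z + Zᵀ * F + Fᵀ * Z + G)).PosSemidef}) =
          ENNReal.ofReal (βm * (Fᵀ * E⁻¹ * F - G).det ^ ((p : ℝ) / 2) *
            (E⁻¹).det ^ ((q : ℝ) / 2)) := by
  obtain ⟨β, hβ, hvol⟩ := exists_volume_image_vecMat_matUnitBall_eq_ofReal (p := p) (q := q)
  refine ⟨β, hβ, fun E F G _ hE hH => ?_⟩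
  obtain ⟨A, hA, rfl⟩ := hE.exists_isUnit_eq_transpose_mul_self
  obtain ⟨B, hB, hHB⟩ := hH.exists_isUnit_eq_transpose_mul_self
  rw [setOf_posSemidef_neg_quadratic_eq_image F G hA hB rfl hHB,
    volume_image_vecMat_image_affine, hvol, ← ENNReal.ofReal_mul (abs_nonneg _), hHB,
    Matrix.det_transpose_mul_self, Matrix.det_inv_transpose_mul_self, Real.sq_rpow_half,
    Real.sq_rpow_half, abs_mul, abs_pow, abs_pow]
  ring_nf

/-- For all positive `p`, `q` there is a constant `β_m > 0`, depending only
on `p` and `q`, such that for every matrix ellipsoid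
`ℰ = {Z : ZᵀEZ + ZᵀF + FᵀZ + G ⪯ 0}` (with `E ≻ 0`, `G` symmetric,
`FᵀE⁻¹F − G ≻ 0`), the Lebesgue measure of `{vec(Z) : Z ∈ ℰ} ⊆ ℝ^{pq}` equals
`β_m (det(FᵀE⁻¹F − G))^{p/2} (det(E⁻¹))^{q/2}`. -/
theorem stmt5 (p q : ℕ) (hp : 0 < p) (hq : 0 < q) :
    ∃ βm : ℝ, 0 < βm ∧
      ∀ (E : Matrix (Fin p) (Fin p) ℝ) (F : Matrix (Fin p) (Fin q) ℝ)
        (G : Matrix (Fin q) (Fin q) ℝ),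
        G.IsHermitian → E.PosDef → (Fᵀ * E⁻¹ * F - G).PosDef →
        volume (vecMat ''
            {Z : Matrix (Fin p) (Fin q) ℝ |
              (-(Zᵀ * E * Z + Zᵀ * F + Fᵀ * Z + G)).PosSemidef}) =
          ENNReal.ofReal (βm * (Fᵀ * E⁻¹ * F - G).det ^ ((p : ℝ) / 2) *
            (E⁻¹).det ^ ((q : ℝ) / 2)) :=
  stmt5_general p q
end

section
/- Suppose the dataset (H, Ẋ, Λ) is generated by a true system Δ_r and satisfies HΛH⊤ ≻ 0. Then F_e⊤ E_e^{−1} F_e − G_e ≻ 0; consequently the set {Δ⊤ : Δ ∈ C(H, Ẋ, Λ)} ⊆ ℝ^{n_h×n_x} is a matrix ellipsoid with parameters E = E_e, F = F_e, G = G_e. -/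
open Matrix

/-!
At the true system `Δ_r` the quadratic `Δ ↦ Δ E_e Δᵀ + Δ F_e + F_eᵀ Δᵀ + G_e` takes the value
`W Λ Wᵀ - tr(Λ) δ I = ∑ⱼ λⱼ (wⱼ wⱼᵀ - δ I)`, which is negative definite because every column
`wⱼ` of `W` has `wⱼᵀ wⱼ < δ`. Completing the square, `F_eᵀ E_e⁻¹ F_e - G_e` is a positive
semidefinite matrix minus this value, hence positive definite. The ellipsoid description is
the defining inequality of `C(H, Ẋ, Λ)` rewritten in `Z = Δᵀ`.
-/

variable {m n p : Type*}

def quadMap [Fintype p] (E : Matrix p p ℝ) (F : Matrix p m ℝ) (G : Matrix m m ℝ)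
    (Δ : Matrix m p ℝ) : Matrix m m ℝ :=
  Δ * E * Δᵀ + Δ * F + Fᵀ * Δᵀ + G

section CompleteSquare

variable [Fintype p] [DecidableEq p] {E : Matrix p p ℝ} {F : Matrix p m ℝ} {G : Matrix m m ℝ}

lemma quadMap_eq_completeSquare (hE : Eᵀ = E) (hdet : IsUnit E.det) (Δ : Matrix m p ℝ) :
    quadMap E F G Δ = (Δᵀ + E⁻¹ * F)ᵀ * E * (Δᵀ + E⁻¹ * F) - (Fᵀ * E⁻¹ * F - G) := by
  have hEinv : (E⁻¹)ᵀ = E⁻¹ := by rw [transpose_nonsing_inv, hE]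
  have hcancel : E * (E⁻¹ * F) = F := by
    rw [← Matrix.mul_assoc, mul_nonsing_inv _ hdet, Matrix.one_mul]
  have hcancel' : E⁻¹ * (E * Δᵀ) = Δᵀ := by
    rw [← Matrix.mul_assoc, nonsing_inv_mul _ hdet, Matrix.one_mul]
  simp only [quadMap, transpose_add, transpose_mul, transpose_transpose, hEinv, Matrix.add_mul,
    Matrix.mul_add, Matrix.mul_assoc, hcancel, hcancel']
  abel

lemma posDef_transpose_mul_inv_mul_sub_of_posDef_neg_quadMap [Fintype m] (hE : E.PosDef)
    {Δ : Matrix m p ℝ} (hΔ : (-quadMap E F G Δ).PosDef) : (Fᵀ * E⁻¹ * F - G).PosDef := by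
  have hEsymm : Eᵀ = E := by simpa using hE.isHermitian.eq
  have hsquare : ((Δᵀ + E⁻¹ * F)ᵀ * E * (Δᵀ + E⁻¹ * F)).PosSemidef := by
    simpa using hE.posSemidef.conjTranspose_mul_mul_same (Δᵀ + E⁻¹ * F)
  rw [quadMap_eq_completeSquare hEsymm ((isUnit_iff_isUnit_det E).mp hE.isUnit)] at hΔ
  simpa using PosDef.posSemidef_add hsquare hΔ

end CompleteSquare

lemma quadMap_of_eq_mul_add [Fintype n] [Fintype p] [DecidableEq m] [DecidableEq n]
    (H : Matrix p n ℝ) (l : n → ℝ) (Δ : Matrix m p ℝ) (W : Matrix m n ℝ) (c : ℝ) :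
    quadMap (H * diagonal l * Hᵀ) (-(H * diagonal l * (Δ * H + W)ᵀ))
        ((Δ * H + W) * diagonal l * (Δ * H + W)ᵀ - c • 1) Δ =
      W * diagonal l * Wᵀ - c • 1 := by
  simp only [quadMap, transpose_add, transpose_mul, transpose_neg, transpose_transpose,
    diagonal_transpose, Matrix.add_mul, Matrix.mul_add, Matrix.mul_neg, Matrix.neg_mul,
    Matrix.mul_assoc]
  abel

lemma mul_diagonal_mul_transpose_eq_sum [Fintype n] [DecidableEq n] (W : Matrix m n ℝ) (l : n → ℝ) :
    W * diagonal l * Wᵀ = ∑ j, l j • vecMulVec (Wᵀ j) (Wᵀ j) := by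
  ext i k
  simp only [mul_apply, diagonal_apply, mul_ite, mul_zero, Finset.sum_ite_eq', Finset.mem_univ,
    if_true, transpose_apply, Matrix.sum_apply, Matrix.smul_apply, vecMulVec_apply, smul_eq_mul]
  exact Finset.sum_congr rfl fun j _ => by ring

lemma posDef_smul_one_sub_vecMulVec_self [Fintype m] [DecidableEq m] {w : m → ℝ} {δ : ℝ}
    (hw : w ⬝ᵥ w < δ) : (δ • 1 - vecMulVec w w).PosDef := by
  refine .of_dotProduct_mulVec_pos ?_ fun x hx => ?_
  · simp [IsHermitian, transpose_vecMulVec]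
  have hx : 0 < x ⬝ᵥ x := by simpa using dotProduct_star_self_pos_iff.mpr hx
  have cauchySchwarz : (w ⬝ᵥ x) ^ 2 ≤ (w ⬝ᵥ w) * (x ⬝ᵥ x) := by
    simpa [dotProduct, sq] using Finset.sum_mul_sq_le_sq_mul_sq Finset.univ w x
  have : x ⬝ᵥ (vecMulVec w w *ᵥ x) = (w ⬝ᵥ x) ^ 2 := by
    rw [vecMulVec_mulVec, dotProduct_smul, op_smul_eq_smul, smul_eq_mul, dotProduct_comm, sq]
  simp only [star_trivial, sub_mulVec, dotProduct_sub, smul_mulVec, one_mulVec, dotProduct_smul,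
    smul_eq_mul, this]
  nlinarith

lemma posDef_trace_smul_sub_mul_diagonal_mul_transpose [Fintype m] [Fintype n] [DecidableEq m]
    [DecidableEq n] {l : n → ℝ} (hl : ∀ j, 0 ≤ l j) (hl0 : l ≠ 0) {W : Matrix m n ℝ} {δ : ℝ}
    (hW : ∀ j, (∑ i, (W i j) ^ 2) < δ) :
    ((trace (diagonal l) * δ) • (1 : Matrix m m ℝ) - W * diagonal l * Wᵀ).PosDef := by
  have hcol j : (δ • 1 - vecMulVec (Wᵀ j) (Wᵀ j)).PosDef :=
    posDef_smul_one_sub_vecMulVec_self (by simpa [dotProduct, sq] using hW j)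
  obtain ⟨j₀, hj₀⟩ : ∃ j, 0 < l j := by
    by_contra! h
    exact hl0 (funext fun j => le_antisymm (h j) (hl j))
  have hsplit : (trace (diagonal l) * δ) • (1 : Matrix m m ℝ) - W * diagonal l * Wᵀ =
      ∑ j, l j • (δ • 1 - vecMulVec (Wᵀ j) (Wᵀ j)) := by
    simp only [trace_diagonal, mul_diagonal_mul_transpose_eq_sum, smul_sub,
      Finset.sum_sub_distrib, Finset.sum_mul, Finset.sum_smul, mul_smul]
  rw [hsplit, ← Finset.add_sum_erase _ _ (Finset.mem_univ j₀)]
  exact ((hcol j₀).smul hj₀).add_posSemidef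
    (posSemidef_sum _ fun j _ => (hcol j).posSemidef.smul (hl j))

lemma ne_zero_of_posDef_mul_diagonal_mul_transpose [Fintype n] [Fintype p] [DecidableEq n]
    [Nonempty p] {H : Matrix p n ℝ} {l : n → ℝ} (h : (H * diagonal l * Hᵀ).PosDef) : l ≠ 0 := by
  rintro rfl
  simpa using h.trace_pos

theorem stmt7_general (n_x n_u n : ℕ) (hx : 0 < n_x)
    (δ : ℝ)
    (H : Matrix (Fin (n_x + n_u)) (Fin n) ℝ) (Xd : Matrix (Fin n_x) (Fin n) ℝ)
    (l : Fin n → ℝ) (hl : ∀ i, 0 ≤ l i)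
    (Δr : Matrix (Fin n_x) (Fin (n_x + n_u)) ℝ) (W : Matrix (Fin n_x) (Fin n) ℝ)
    (hgen : Xd = Δr * H + W) (hW : ∀ j, (∑ i, (W i j) ^ 2) < δ)
    (hpd : (H * Matrix.diagonal l * Hᵀ).PosDef) :
    ((-(H * Matrix.diagonal l * Xdᵀ))ᵀ * (H * Matrix.diagonal l * Hᵀ)⁻¹ *
        (-(H * Matrix.diagonal l * Xdᵀ)) -
      (Xd * Matrix.diagonal l * Xdᵀ -
        (Matrix.trace (Matrix.diagonal l) * δ) • 1)).PosDef ∧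
    (fun Δ => Δᵀ) '' admisSet n_x (n_x + n_u) δ H Xd (Matrix.diagonal l) =
      {Z : Matrix (Fin (n_x + n_u)) (Fin n_x) ℝ |
        (-(Zᵀ * (H * Matrix.diagonal l * Hᵀ) * Z + Zᵀ * (-(H * Matrix.diagonal l * Xdᵀ)) +
          (-(H * Matrix.diagonal l * Xdᵀ))ᵀ * Z +
          (Xd * Matrix.diagonal l * Xdᵀ -
            (Matrix.trace (Matrix.diagonal l) * δ) • 1))).PosSemidef} := by
  refine ⟨?_, ?_⟩
  · have : Nonempty (Fin (n_x + n_u)) := ⟨⟨0, by omega⟩⟩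
    have hl0 := ne_zero_of_posDef_mul_diagonal_mul_transpose hpd
    refine posDef_transpose_mul_inv_mul_sub_of_posDef_neg_quadMap hpd (Δ := Δr) ?_
    rw [hgen, quadMap_of_eq_mul_add, neg_sub]
    exact posDef_trace_smul_sub_mul_diagonal_mul_transpose hl hl0 hW
  · rw [Set.image_eq_preimage_of_inverse transpose_transpose transpose_transpose]
    ext Z
    simp [admisSet]

/-- If the dataset is generated by a true system `Δ_r` (i.e.
`Ẋ = Δ_r H + W` with columns of `W` of squared norm `< δ`) and `HΛHᵀ ≻ 0`, then
`F_eᵀ E_e⁻¹ F_e − G_e ≻ 0`; consequently `{Δᵀ : Δ ∈ C(H,Ẋ,Λ)}` is a matrix ellipsoid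
with parameters `E = E_e ≻ 0`, `F = F_e`, `G = G_e`. -/
theorem stmt7 (n_x n_u n : ℕ) (hx : 0 < n_x) (hu : 0 < n_u) (hn : 0 < n)
    (δ : ℝ) (hδ : 0 < δ)
    (H : Matrix (Fin (n_x + n_u)) (Fin n) ℝ) (Xd : Matrix (Fin n_x) (Fin n) ℝ)
    (l : Fin n → ℝ) (hl : ∀ i, 0 ≤ l i)
    (Δr : Matrix (Fin n_x) (Fin (n_x + n_u)) ℝ) (W : Matrix (Fin n_x) (Fin n) ℝ)
    (hgen : Xd = Δr * H + W) (hW : ∀ j, (∑ i, (W i j) ^ 2) < δ)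
    (hpd : (H * Matrix.diagonal l * Hᵀ).PosDef) :
    ((-(H * Matrix.diagonal l * Xdᵀ))ᵀ * (H * Matrix.diagonal l * Hᵀ)⁻¹ *
        (-(H * Matrix.diagonal l * Xdᵀ)) -
      (Xd * Matrix.diagonal l * Xdᵀ -
        (Matrix.trace (Matrix.diagonal l) * δ) • 1)).PosDef ∧
    (fun Δ => Δᵀ) '' admisSet n_x (n_x + n_u) δ H Xd (Matrix.diagonal l) =
      {Z : Matrix (Fin (n_x + n_u)) (Fin n_x) ℝ |
        (-(Zᵀ * (H * Matrix.diagonal l * Hᵀ) * Z + Zᵀ * (-(H * Matrix.diagonal l * Xdᵀ)) +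
          (-(H * Matrix.diagonal l * Xdᵀ))ᵀ * Z +
          (Xd * Matrix.diagonal l * Xdᵀ -
            (Matrix.trace (Matrix.diagonal l) * δ) • 1))).PosSemidef} :=
  stmt7_general n_x n_u n hx δ H Xd l hl Δr W hgen hW hpd
end

section
/- Consider noise-free data: let Δ_r ∈ ℝ^{n_x×n_h}, H ∈ ℝ^{n_h×n}, Ẋ = Δ_r H, and let Λ = diag(λ_1,…,λ_n) with λ_i ≥ 0 and HΛH⊤ ≻ 0. Set E_e := HΛH⊤, F_e := −HΛẊ⊤, G_e := ẊΛẊ⊤ (the case δ = 0). Then the matrix inequality Δ E_e Δ⊤ + Δ F_e + F_e⊤ Δ⊤ + G_e ⪯ 0 has exactly one solution Δ ∈ ℝ^{n_x×n_h}, namely Δ = −F_e⊤ E_e^{−1}, and this solution equals Δ_r. -/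
/-!
With noise-free data `Ẋ = Δr H` one has `F_e = -E_e Δrᵀ` and `G_e = Δr E_e Δrᵀ`, so the left-hand
side of the inequality is the completed square `(Δ - Δr) E_e (Δ - Δr)ᵀ`. Since `E_e ≻ 0`, this
square is `⪯ 0` only if it vanishes, and then each row of `Δ - Δr` is zero.
-/

open Matrix
open scoped ComplexOrder

namespace Matrix

variable {m n 𝕜 : Type*} [RCLike 𝕜]

lemma PosSemidef.eq_zero_of_neg {S : Matrix n n 𝕜} (hS : S.PosSemidef) (hnegS : (-S).PosSemidef) :
    S = 0 := by
  open scoped MatrixOrder in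
  exact le_antisymm (by simpa [le_iff] using hnegS) (nonneg_iff_posSemidef.mpr hS)

variable [Fintype n]

lemma PosDef.eq_zero_of_mul_mul_conjTranspose_eq_zero {E : Matrix n n 𝕜} (hE : E.PosDef)
    {M : Matrix m n 𝕜} (h : M * E * Mᴴ = 0) : M = 0 := by
  ext i j
  by_contra hij
  have hrow : star (M i) ≠ 0 := fun h0 => hij (by simpa using congrFun h0 j)
  have hpos := hE.dotProduct_mulVec_pos hrow
  rw [star_star, dotProduct_mulVec] at hpos
  have hdiag : (M * E * Mᴴ) i i = M i ᵥ* E ⬝ᵥ star (M i) := by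
    simp [mul_apply, dotProduct, vecMul]
  simp [h, ← hdiag] at hpos

lemma PosDef.posSemidef_neg_mul_mul_conjTranspose_iff [Finite m] {E : Matrix n n 𝕜} (hE : E.PosDef)
    (M : Matrix m n 𝕜) : (-(M * E * Mᴴ)).PosSemidef ↔ M = 0 := by
  refine ⟨fun h => hE.eq_zero_of_mul_mul_conjTranspose_eq_zero ?_, ?_⟩
  · exact (hE.posSemidef.mul_mul_conjTranspose_same M).eq_zero_of_neg h
  · rintro rfl
    simpa using PosSemidef.zero

lemma sub_mul_mul_conjTranspose_sub {R : Type*} [Ring R] [StarRing R] (E : Matrix n n R)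
    (Δ Δ₀ : Matrix m n R) :
    (Δ - Δ₀) * E * (Δ - Δ₀)ᴴ = Δ * E * Δᴴ - Δ * E * Δ₀ᴴ - Δ₀ * E * Δᴴ + Δ₀ * E * Δ₀ᴴ := by
  simp only [conjTranspose_sub, Matrix.sub_mul, Matrix.mul_sub]
  abel

end Matrix

theorem stmt9_general (n_x n_u n : ℕ)
    (Δr : Matrix (Fin n_x) (Fin (n_x + n_u)) ℝ)
    (H : Matrix (Fin (n_x + n_u)) (Fin n) ℝ)
    (l : Fin n → ℝ)
    (hpd : (H * Matrix.diagonal l * Hᵀ).PosDef) :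
    -((-(H * Matrix.diagonal l * (Δr * H)ᵀ))ᵀ * (H * Matrix.diagonal l * Hᵀ)⁻¹) = Δr ∧
    ∀ Δ : Matrix (Fin n_x) (Fin (n_x + n_u)) ℝ,
      (-(Δ * (H * Matrix.diagonal l * Hᵀ) * Δᵀ + Δ * (-(H * Matrix.diagonal l * (Δr * H)ᵀ)) +
          (-(H * Matrix.diagonal l * (Δr * H)ᵀ))ᵀ * Δᵀ +
          (Δr * H) * Matrix.diagonal l * (Δr * H)ᵀ)).PosSemidef ↔ Δ = Δr := by
  set E := H * diagonal l * Hᵀ with hE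
  have hEsymm : Eᵀ = E := by simpa [conjTranspose_eq_transpose_of_trivial] using hpd.isHermitian.eq
  have hF : H * diagonal l * (Δr * H)ᵀ = E * Δrᵀ := by
    rw [transpose_mul, hE, Matrix.mul_assoc _ Hᵀ]
  have hG : Δr * H * diagonal l * (Δr * H)ᵀ = Δr * E * Δrᵀ := by
    simp only [hE, transpose_mul, Matrix.mul_assoc]
  rw [hF, hG]
  refine ⟨?_, fun Δ => ?_⟩
  · rw [transpose_neg, Matrix.neg_mul, neg_neg, transpose_mul, transpose_transpose, hEsymm,
      mul_nonsing_inv_cancel_right _ _ (isUnit_iff_isUnit_det E |>.mp hpd.isUnit)]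
  have hsquare : Δ * E * Δᵀ + Δ * -(E * Δrᵀ) + (-(E * Δrᵀ))ᵀ * Δᵀ + Δr * E * Δrᵀ
      = (Δ - Δr) * E * (Δ - Δr)ᴴ := by
    rw [sub_mul_mul_conjTranspose_sub]
    simp only [conjTranspose_eq_transpose_of_trivial, transpose_neg, transpose_mul,
      transpose_transpose, hEsymm, Matrix.mul_neg, Matrix.neg_mul, Matrix.mul_assoc]
    abel
  rw [hsquare, hpd.posSemidef_neg_mul_mul_conjTranspose_iff, sub_eq_zero]

/-- Noise-free data: `Ẋ = Δ_r H`, `Λ = diag(λᵢ)` with `λᵢ ≥ 0` and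
`HΛHᵀ ≻ 0`. With `E_e := HΛHᵀ`, `F_e := −HΛẊᵀ`, `G_e := ẊΛẊᵀ` (the case `δ = 0`),
the inequality `Δ E_e Δᵀ + Δ F_e + F_eᵀ Δᵀ + G_e ⪯ 0` has exactly one solution,
namely `Δ = −F_eᵀ E_e⁻¹ = Δ_r`. -/
theorem stmt9 (n_x n_u n : ℕ) (hx : 0 < n_x) (hu : 0 < n_u) (hn : 0 < n)
    (Δr : Matrix (Fin n_x) (Fin (n_x + n_u)) ℝ)
    (H : Matrix (Fin (n_x + n_u)) (Fin n) ℝ)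
    (l : Fin n → ℝ) (hl : ∀ i, 0 ≤ l i)
    (hpd : (H * Matrix.diagonal l * Hᵀ).PosDef) :
    -((-(H * Matrix.diagonal l * (Δr * H)ᵀ))ᵀ * (H * Matrix.diagonal l * Hᵀ)⁻¹) = Δr ∧
    ∀ Δ : Matrix (Fin n_x) (Fin (n_x + n_u)) ℝ,
      (-(Δ * (H * Matrix.diagonal l * Hᵀ) * Δᵀ + Δ * (-(H * Matrix.diagonal l * (Δr * H)ᵀ)) +
          (-(H * Matrix.diagonal l * (Δr * H)ᵀ))ᵀ * Δᵀ +
          (Δr * H) * Matrix.diagonal l * (Δr * H)ᵀ)).PosSemidef ↔ Δ = Δr :=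
  stmt9_general n_x n_u n Δr H l hpd
end

section
/- Let H ∈ ℝ^{n_h×n_h} and Λ = diag(λ_1,…,λ_{n_h}) with all λ_i ≥ 0 and HΛH⊤ ≻ 0, and let δ > 0, β > 0. Then μ̂(H, Λ) ≥ μ̂(H, I_{n_h}), i.e., (tr(Λ) δ)^{n_x n_h/2} det(HΛH⊤)^{−n_x/2} ≥ (n_h δ)^{n_x n_h/2} det(HH⊤)^{−n_x/2}. -/
open Matrix

/-- For a square `H ∈ ℝ^{n_h×n_h}` and `Λ = diag(λᵢ)` with `λᵢ ≥ 0` and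
`HΛHᵀ ≻ 0`, `δ > 0`, `β > 0`, one has `μ̂(H,Λ) ≥ μ̂(H,I)`, i.e.
`β (tr(Λ)δ)^{n_x n_h/2} det(HΛHᵀ)^{−n_x/2} ≥ β (n_h δ)^{n_x n_h/2} det(HHᵀ)^{−n_x/2}`,
where `n_h = n_x + n_u`. -/
theorem stmt11 (n_x n_u : ℕ) (hx : 0 < n_x) (hu : 0 < n_u)
    (H : Matrix (Fin (n_x + n_u)) (Fin (n_x + n_u)) ℝ)
    (l : Fin (n_x + n_u) → ℝ) (hl : ∀ i, 0 ≤ l i)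
    (hpd : (H * Matrix.diagonal l * Hᵀ).PosDef)
    (δ β : ℝ) (hδ : 0 < δ) (hβ : 0 < β) :
    β * (Matrix.trace (Matrix.diagonal l) * δ) ^ ((n_x * (n_x + n_u) : ℝ) / 2) *
        (H * Matrix.diagonal l * Hᵀ).det ^ (-(n_x : ℝ) / 2) ≥
      β * (((n_x + n_u : ℕ) : ℝ) * δ) ^ ((n_x * (n_x + n_u) : ℝ) / 2) *
        (H * Hᵀ).det ^ (-(n_x : ℝ) / 2) := by
  classical
  have hn : (0:ℕ) < n_x + n_u := by omega
  haveI : Nonempty (Fin (n_x + n_u)) := Fin.pos_iff_nonempty.mp hn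
  set P : ℝ := ∏ i, l i with hPdef
  set T : ℝ := ∑ i, l i with hTdef
  have hdet : (H * Matrix.diagonal l * Hᵀ).det = H.det ^ 2 * P := by
    rw [det_mul, det_mul, det_transpose, det_diagonal]; ring
  have hdpos : 0 < (H * Matrix.diagonal l * Hᵀ).det := hpd.det_pos
  have hdet2 : 0 < H.det ^ 2 * P := by rw [← hdet]; exact hdpos
  have hPnn : 0 ≤ P := Finset.prod_nonneg fun i _ => hl i
  have hP : 0 < P := by nlinarith [sq_nonneg H.det]
  have hHd : 0 < H.det ^ 2 := by nlinarith
  have hli : ∀ i, 0 < l i := by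
    intro i
    rcases (hl i).lt_or_eq with h | h
    · exact h
    · exfalso
      have : P = 0 := Finset.prod_eq_zero (Finset.mem_univ i) h.symm
      exact hP.ne' this
  have hT : 0 < T := Finset.sum_pos (fun i _ => hli i) Finset.univ_nonempty
  have hnpos : (0:ℝ) < ((n_x + n_u : ℕ) : ℝ) := by positivity
  have htr : Matrix.trace (Matrix.diagonal l) = T := Matrix.trace_diagonal l
  -- AM-GM : P ≤ (T / (n_x + n_u : ℕ)) ^ n
  have amgm : P ≤ (T / (n_x + n_u : ℕ)) ^ (n_x + n_u : ℕ) := by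
    have h := Real.geom_mean_le_arith_mean (Finset.univ : Finset (Fin (n_x + n_u)))
      (fun _ => (1:ℝ)) l (fun i _ => zero_le_one) (by
        simp [Finset.card_univ]
        positivity) (fun i _ => hl i)
    simp only [Real.rpow_one, one_mul, Finset.sum_const, Finset.card_univ,
      Fintype.card_fin, nsmul_eq_mul, mul_one] at h
    -- h : P ^ (((n_x + n_u : ℕ):ℝ))⁻¹ ≤ T / n
    have h2 : (P ^ (((n_x + n_u : ℕ):ℝ))⁻¹) ^ (n_x + n_u : ℕ) ≤ (T / (n_x + n_u : ℕ)) ^ (n_x + n_u : ℕ) :=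
      pow_le_pow_left₀ (Real.rpow_nonneg hPnn _) h _
    rwa [← Real.rpow_natCast (P ^ (((n_x + n_u : ℕ):ℝ))⁻¹) (n_x + n_u), ← Real.rpow_mul hPnn,
      inv_mul_cancel₀ (ne_of_gt hnpos), Real.rpow_one] at h2
  set a : ℝ := (n_x * (n_x + n_u) : ℝ) / 2 with ha
  have hanneg : 0 ≤ a := by positivity
  -- key : ((n_x + n_u : ℕ) : ℝ) ^ a * P ^ ((n_x:ℝ)/2) ≤ T ^ a
  have key : ((n_x + n_u : ℕ) : ℝ) ^ a * P ^ ((n_x : ℝ) / 2) ≤ T ^ a := by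
    have h1 : P ^ ((n_x : ℝ) / 2) ≤ ((T / (n_x + n_u : ℕ)) ^ (n_x + n_u : ℕ)) ^ ((n_x : ℝ) / 2) :=
      Real.rpow_le_rpow hPnn amgm (by positivity)
    have h2 : ((T / (n_x + n_u : ℕ)) ^ (n_x + n_u : ℕ)) ^ ((n_x : ℝ) / 2) = (T / (n_x + n_u : ℕ)) ^ a := by
      rw [← Real.rpow_natCast (T / (n_x + n_u : ℕ)) (n_x + n_u), ← Real.rpow_mul (by positivity)]
      congr 1
      push_cast [ha]
      ring
    have h3 : ((n_x + n_u : ℕ) : ℝ) ^ a * (T / (n_x + n_u : ℕ)) ^ a = T ^ a := by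
      rw [← Real.mul_rpow (le_of_lt hnpos) (by positivity)]
      rw [mul_div_cancel₀ _ (ne_of_gt hnpos)]
    calc ((n_x + n_u : ℕ) : ℝ) ^ a * P ^ ((n_x : ℝ) / 2) ≤ ((n_x + n_u : ℕ) : ℝ) ^ a * (T / (n_x + n_u : ℕ)) ^ a := by
          rw [h2] at h1
          exact mul_le_mul_of_nonneg_left h1 (Real.rpow_nonneg (le_of_lt hnpos) _)
      _ = T ^ a := h3
  -- now assemble
  rw [htr, hdet]
  have hdetHHt : (H * Hᵀ).det = H.det ^ 2 := by
    rw [det_mul, det_transpose]; ring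
  rw [hdetHHt]
  rw [Real.mul_rpow (le_of_lt hT) (le_of_lt hδ),
      Real.mul_rpow (le_of_lt hnpos) (le_of_lt hδ),
      Real.mul_rpow (le_of_lt hHd) hPnn]
  have hPneg : P ^ (-(n_x : ℝ) / 2) = (P ^ ((n_x : ℝ) / 2))⁻¹ := by
    rw [← Real.rpow_neg hPnn]; ring_nf
  have hdpos' : 0 < (H.det ^ 2 : ℝ) ^ (-(n_x : ℝ) / 2) := Real.rpow_pos_of_pos hHd _
  have hδa : 0 < δ ^ a := Real.rpow_pos_of_pos hδ _
  have hPa : 0 < P ^ ((n_x : ℝ) / 2) := Real.rpow_pos_of_pos hP _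
  rw [ge_iff_le, hPneg]
  have goal' : ((n_x + n_u : ℕ) : ℝ) ^ a * δ ^ a ≤ T ^ a * δ ^ a * (P ^ ((n_x : ℝ) / 2))⁻¹ := by
    have step := mul_le_mul_of_nonneg_right key hδa.le
    calc ((n_x + n_u : ℕ) : ℝ) ^ a * δ ^ a
        = (((n_x + n_u : ℕ) : ℝ) ^ a * P ^ ((n_x : ℝ) / 2) * δ ^ a) * (P ^ ((n_x : ℝ) / 2))⁻¹ := by
          field_simp
      _ ≤ (T ^ a * δ ^ a) * (P ^ ((n_x : ℝ) / 2))⁻¹ :=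
          mul_le_mul_of_nonneg_right step (inv_nonneg.mpr hPa.le)
      _ = T ^ a * δ ^ a * (P ^ ((n_x : ℝ) / 2))⁻¹ := by ring
  calc β * (((n_x + n_u : ℕ) : ℝ) ^ a * δ ^ a) * (H.det ^ 2 : ℝ) ^ (-(n_x : ℝ) / 2)
      ≤ β * (T ^ a * δ ^ a * (P ^ ((n_x : ℝ) / 2))⁻¹) * (H.det ^ 2 : ℝ) ^ (-(n_x : ℝ) / 2) := by
        apply mul_le_mul_of_nonneg_right _ hdpos'.le
        exact mul_le_mul_of_nonneg_left goal' hβ.le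
    _ = β * (T ^ a * δ ^ a) * ((H.det ^ 2 : ℝ) ^ (-(n_x : ℝ) / 2) * (P ^ ((n_x : ℝ) / 2))⁻¹) := by
        ring
end

section
/- (Matrix S-lemma.) Let n_a, n_b ≥ 1, and let M̃ and Ñ be symmetric matrices in ℝ^{(n_a+n_b)×(n_a+n_b)}. Assume the generalized Slater condition: there exists Z̄ ∈ ℝ^{n_b×n_a} such that [I_{n_a}; Z̄]⊤ Ñ [I_{n_a}; Z̄] ≻ 0. Then the following are equivalent: (1) for every Z ∈ ℝ^{n_b×n_a} with [I_{n_a}; Z]⊤ Ñ [I_{n_a}; Z] ⪰ 0 one has [I_{n_a}; Z]⊤ M̃ [I_{n_a}; Z] ⪰ 0; (2) there exists a scalar α ≥ 0 such that M̃ − α Ñ ⪰ 0. -/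
/-!
By Dines' theorem the joint range `{(Q₁ v, Q₂ v)}` of two real quadratic forms is a convex cone;
this gives the classical S-lemma: if `Q₂ v ≥ 0 → Q₁ v ≥ 0` and `Q₂` takes a positive value, then
`Q₁ - α Q₂ ≥ 0` for `α = inf {Q₁ v / Q₂ v | Q₂ v > 0}`.

The matrix S-lemma reduces to it. Take `w = (x, y)` with `wᵀ N w > 0` and `x ≠ 0`. A rank-one
correction of `Z̄` gives a `Z` with `Z x = y` whose block `[I; Z]ᵀ N [I; Z]` is still positive
semidefinite (it is the Slater block evaluated at a shifted argument), so
`wᵀ M w = xᵀ [I; Z]ᵀ M [I; Z] x ≥ 0`. The remaining `w` with `wᵀ N w ≥ 0` are limits of such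
vectors along the Slater direction.
-/

open Matrix

theorem Real.exists_sq_sub_sq_eq (a b : ℝ) : ∃ x y : ℝ, x ^ 2 - y ^ 2 = a ∧ 2 * x * y = b := by
  obtain ⟨z, hz⟩ := IsAlgClosed.exists_pow_nat_eq (⟨a, b⟩ : ℂ) two_pos
  refine ⟨z.re, z.im, ?_, ?_⟩
  · simpa [sq] using congrArg Complex.re hz
  · have := congrArg Complex.im hz
    simp only [sq, Complex.mul_im] at this
    linarith

theorem Matrix.exists_mulVec_eq_or_exists_mulVec_eq_zero {n K : Type*} [Fintype n]
    [DecidableEq n] [Field K] (A : Matrix n n K) (b : n → K) :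
    (∃ e, A *ᵥ e = b) ∨ ∃ e ≠ 0, A *ᵥ e = 0 := by
  by_cases hA : A.det = 0
  · exact .inr (exists_mulVec_eq_zero_iff.mpr hA)
  · refine .inl ⟨A⁻¹ *ᵥ b, ?_⟩
    rw [mulVec_mulVec, mul_nonsing_inv _ (isUnit_iff_ne_zero.mpr hA), one_mulVec]

namespace QuadraticMap

variable {V : Type*} [AddCommGroup V] [Module ℝ V]

theorem map_smul_add_smul (Q : QuadraticMap ℝ V ℝ) (x y : ℝ) (v₁ v₂ : V) :
    Q (x • v₁ + y • v₂) = x ^ 2 * Q v₁ + y ^ 2 * Q v₂ + x * y * polar Q v₁ v₂ := by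
  rw [QuadraticMap.map_add Q, Q.map_smul, Q.map_smul, polar_smul_left, polar_smul_right]
  simp only [smul_eq_mul]
  ring

/-- Dines' theorem. Since `(x² - y², 2xy)` sweeps out `ℝ²` and
`2 Q (x v₁ + y v₂) = (x² + y²) (Q v₁ + Q v₂) + (x² - y²) (Q v₁ - Q v₂) + 2xy polar Q v₁ v₂`,
it suffices to solve a `2 × 2` linear system up to a positive multiple of the right-hand side. -/
theorem exists_map_eq_add_map (Q₁ Q₂ : QuadraticMap ℝ V ℝ) (v₁ v₂ : V) :
    ∃ v, Q₁ v = Q₁ v₁ + Q₁ v₂ ∧ Q₂ v = Q₂ v₁ + Q₂ v₂ := by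
  obtain ⟨e, μ, he, hμ, hpos⟩ : ∃ (e : Fin 2 → ℝ) (μ : ℝ),
      !![Q₁ v₁ - Q₁ v₂, polar Q₁ v₁ v₂; Q₂ v₁ - Q₂ v₂, polar Q₂ v₁ v₂] *ᵥ e =
        μ • ![Q₁ v₁ + Q₁ v₂, Q₂ v₁ + Q₂ v₂] ∧ 0 ≤ μ ∧ (e ≠ 0 ∨ 0 < μ) := by
    rcases exists_mulVec_eq_or_exists_mulVec_eq_zero
      !![Q₁ v₁ - Q₁ v₂, polar Q₁ v₁ v₂; Q₂ v₁ - Q₂ v₂, polar Q₂ v₁ v₂]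
      ![Q₁ v₁ + Q₁ v₂, Q₂ v₁ + Q₂ v₂] with ⟨e, he⟩ | ⟨e, he0, he⟩
    · exact ⟨e, 1, by rw [he, one_smul], zero_le_one, .inr one_pos⟩
    · exact ⟨e, 0, by rw [he, zero_smul], le_rfl, .inl he0⟩
  obtain ⟨x, y, hx, hy⟩ := Real.exists_sq_sub_sq_eq (e 0) (e 1)
  have hc : 0 < (x ^ 2 + y ^ 2 + μ) / 2 := by
    rcases hpos with he0 | hμ
    · suffices 0 < x ^ 2 + y ^ 2 by positivity
      by_contra! h
      have hx0 : x = 0 := by nlinarith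
      have hy0 : y = 0 := by nlinarith
      exact he0 (funext fun i => by fin_cases i <;> simp [← hx, ← hy, hx0, hy0])
    · positivity
  have h₁ := congrFun he 0
  have h₂ := congrFun he 1
  simp only [mulVec, dotProduct, Fin.sum_univ_two, of_apply, cons_val', cons_val_zero,
    cons_val_one, cons_val_fin_one, Pi.smul_apply, smul_eq_mul, ← hx, ← hy] at h₁ h₂
  refine ⟨(√((x ^ 2 + y ^ 2 + μ) / 2))⁻¹ • (x • v₁ + y • v₂), ?_, ?_⟩ <;>
    rw [QuadraticMap.map_smul, smul_eq_mul, ← mul_inv, Real.mul_self_sqrt hc.le,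
      map_smul_add_smul, inv_mul_eq_iff_eq_mul₀ hc.ne']
  · linear_combination h₁ / 2
  · linear_combination h₂ / 2

theorem exists_map_eq_smul_add_smul (Q₁ Q₂ : QuadraticMap ℝ V ℝ) (v₁ v₂ : V) {a b : ℝ}
    (ha : 0 ≤ a) (hb : 0 ≤ b) :
    ∃ v, Q₁ v = a * Q₁ v₁ + b * Q₁ v₂ ∧ Q₂ v = a * Q₂ v₁ + b * Q₂ v₂ := by
  obtain ⟨v, h₁, h₂⟩ := exists_map_eq_add_map Q₁ Q₂ (√a • v₁) (√b • v₂)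
  refine ⟨v, ?_, ?_⟩ <;>
    simp only [h₁, h₂, QuadraticMap.map_smul, smul_eq_mul, Real.mul_self_sqrt ha,
      Real.mul_self_sqrt hb]

theorem s_lemma (Q₁ Q₂ : QuadraticMap ℝ V ℝ) (h : ∀ v, 0 ≤ Q₂ v → 0 ≤ Q₁ v) {v₀ : V}
    (hv₀ : 0 < Q₂ v₀) : ∃ α : ℝ, 0 ≤ α ∧ ∀ v, α * Q₂ v ≤ Q₁ v := by
  have cross : ∀ u v, Q₂ u < 0 → 0 < Q₂ v → Q₁ v * Q₂ u ≤ Q₁ u * Q₂ v := by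
    intro u v hu hv
    obtain ⟨w, h₁, h₂⟩ := exists_map_eq_smul_add_smul Q₁ Q₂ u v hv.le (neg_nonneg.2 hu.le)
    have := h w (h₂.trans (by ring)).ge
    linarith
  set S := (fun v => Q₁ v / Q₂ v) '' {v | 0 < Q₂ v}
  have hS : S.Nonempty := ⟨_, v₀, hv₀, rfl⟩
  have hS0 : ∀ s ∈ S, 0 ≤ s := by
    rintro _ ⟨v, hv, rfl⟩
    exact div_nonneg (h v hv.le) hv.le
  refine ⟨sInf S, le_csInf hS hS0, fun v => ?_⟩
  rcases lt_trichotomy (Q₂ v) 0 with hv | hv | hv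
  · rw [← div_le_iff_of_neg hv]
    refine le_csInf hS ?_
    rintro _ ⟨u, hu, rfl⟩
    rw [← neg_div_neg_eq, div_le_div_iff₀ (neg_pos.2 hv) hu]
    linarith [cross v u hv hu]
  · simpa [hv] using h v hv.ge
  · rw [← le_div_iff₀ hv]
    exact csInf_le ⟨0, hS0⟩ ⟨v, hv, rfl⟩

end QuadraticMap

theorem exists_ne_zero_forall_add_smul_ne_zero {V : Type*} [AddCommGroup V] [Module ℝ V]
    [Nontrivial V] (x : V) : ∃ e ≠ 0, ∀ s : ℝ, 0 < |s| → |s| < 1 → x + s • e ≠ 0 := by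
  by_cases hx : x = 0
  · obtain ⟨e, he⟩ := exists_ne (0 : V)
    exact ⟨e, he, fun s hs _ => by rw [hx, zero_add]; exact smul_ne_zero (abs_pos.mp hs) he⟩
  · refine ⟨x, hx, fun s _ hs => ?_⟩
    rw [show x + s • x = (1 + s) • x by rw [add_smul, one_smul]]
    exact smul_ne_zero (by linarith [neg_abs_le s]) hx

namespace Matrix

variable {m n R : Type*} [Fintype n] [CommRing R]

theorem toQuadraticForm'_apply [DecidableEq n] (A : Matrix n n R) (v : n → R) :
    A.toQuadraticForm' v = v ⬝ᵥ A *ᵥ v := by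
  simp [Matrix.toQuadraticForm', toLinearMap₂'_apply']

theorem IsSymm.dotProduct_mulVec_comm {A : Matrix n n R} (hA : A.IsSymm) (u v : n → R) :
    u ⬝ᵥ A *ᵥ v = v ⬝ᵥ A *ᵥ u := by
  rw [dotProduct_mulVec, ← mulVec_transpose, hA.eq, dotProduct_comm]

theorem IsSymm.dotProduct_mulVec_smul_add {A : Matrix n n R} (hA : A.IsSymm) {w u v : n → R}
    {t : R} (hw : w ⬝ᵥ A *ᵥ w = t ^ 2 * (u ⬝ᵥ A *ᵥ u)) (hv : (w + t • u) ⬝ᵥ A *ᵥ v = 0) (a : R) :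
    (a • w + v) ⬝ᵥ A *ᵥ (a • w + v) = (v - (a * t) • u) ⬝ᵥ A *ᵥ (v - (a * t) • u) := by
  simp only [mulVec_add, mulVec_sub, mulVec_smul, dotProduct_add, dotProduct_sub, add_dotProduct,
    sub_dotProduct, dotProduct_smul, smul_dotProduct, smul_eq_mul] at hv ⊢
  rw [hA.dotProduct_mulVec_comm v w, hA.dotProduct_mulVec_comm v u]
  linear_combination a ^ 2 * hw + 2 * a * hv

theorem fromRows_one_add_vecMulVec_mulVec [DecidableEq n] (Z : Matrix m n R) (x φ ξ : n → R)
    (y : m → R) :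
    fromRows 1 (Z + vecMulVec (y - Z *ᵥ x) φ) *ᵥ ξ =
      (φ ⬝ᵥ ξ) • Sum.elim x y + fromRows 1 Z *ᵥ (ξ - (φ ⬝ᵥ ξ) • x) := by
  ext (i | i)
  · simp [fromRows_mulVec, add_mulVec, vecMulVec_mulVec, mul_comm]
  · simp only [fromRows_mulVec, add_mulVec, vecMulVec_mulVec, op_smul_eq_smul, Sum.elim_inr,
      Pi.add_apply, Pi.smul_apply, Pi.sub_apply, smul_eq_mul, mulVec_sub, mulVec_smul]
    ring

variable [Fintype m]

theorem dotProduct_transpose_mul_mul_mulVec (A : Matrix m m R) (L : Matrix m n R) (ξ : n → R) :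
    ξ ⬝ᵥ (Lᵀ * A * L) *ᵥ ξ = (L *ᵥ ξ) ⬝ᵥ A *ᵥ (L *ᵥ ξ) := by
  rw [← mulVec_mulVec, ← mulVec_mulVec, dotProduct_mulVec, vecMul_transpose]

variable [DecidableEq n] {M N : Matrix (n ⊕ m) (n ⊕ m) ℝ} {Zbar : Matrix m n ℝ}

/-- With `u = [I; Z̄] x` and `t² uᵀ N u = wᵀ N w`, the matrix `Z = Z̄ + (y - Z̄ x) φᵀ`, where `φ`
is the functional `c ↦ (w + t u)ᵀ N [I; Z̄] c` normalised by `φ x = 1`, gives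
`[I; Z] ξ = a w + [I; Z̄] c` with `a = φ ξ` and `φ c = 0`; for such `c` the quadratic form of `N`
at this vector equals its value at `[I; Z̄] (c - a t x)`. The sign of `t` makes `φ` well defined. -/
theorem exists_mulVec_eq_posSemidef_fromRows (hN : N.IsHermitian)
    (hG : ((fromRows (1 : Matrix n n ℝ) Zbar)ᵀ * N * fromRows (1 : Matrix n n ℝ) Zbar).PosDef)
    {x : n → ℝ} (hx : x ≠ 0) {y : m → ℝ} (hq : 0 < Sum.elim x y ⬝ᵥ N *ᵥ Sum.elim x y) :
    ∃ Z : Matrix m n ℝ, Z *ᵥ x = y ∧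
      ((fromRows (1 : Matrix n n ℝ) Z)ᵀ * N * fromRows (1 : Matrix n n ℝ) Z).PosSemidef := by
  have hN' : N.IsSymm := isHermitian_iff_isSymm.mp hN
  set w := Sum.elim x y
  set u := fromRows (1 : Matrix n n ℝ) Zbar *ᵥ x
  have hγ : 0 < u ⬝ᵥ N *ᵥ u := by
    have := hG.dotProduct_mulVec_pos hx
    rwa [star_trivial, dotProduct_transpose_mul_mul_mulVec] at this
  obtain ⟨t, ht, hne⟩ : ∃ t : ℝ, w ⬝ᵥ N *ᵥ w = t ^ 2 * (u ⬝ᵥ N *ᵥ u) ∧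
      w ⬝ᵥ N *ᵥ u + t * (u ⬝ᵥ N *ᵥ u) ≠ 0 := by
    have hsq : √(w ⬝ᵥ N *ᵥ w / u ⬝ᵥ N *ᵥ u) ^ 2 * (u ⬝ᵥ N *ᵥ u) = w ⬝ᵥ N *ᵥ w := by
      rw [Real.sq_sqrt (by positivity), div_mul_cancel₀ _ hγ.ne']
    have hpos : 0 < √(w ⬝ᵥ N *ᵥ w / u ⬝ᵥ N *ᵥ u) * (u ⬝ᵥ N *ᵥ u) := by positivity
    rcases le_or_gt 0 (w ⬝ᵥ N *ᵥ u) with hp | hp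
    · exact ⟨√(w ⬝ᵥ N *ᵥ w / u ⬝ᵥ N *ᵥ u), hsq.symm, by linarith⟩
    · exact ⟨-√(w ⬝ᵥ N *ᵥ w / u ⬝ᵥ N *ᵥ u), by rw [neg_sq, hsq], by linarith⟩
  set h := ((w + t • u) ᵥ* N) ᵥ* fromRows (1 : Matrix n n ℝ) Zbar
  have hh : ∀ c : n → ℝ, h ⬝ᵥ c = (w + t • u) ⬝ᵥ N *ᵥ (fromRows (1 : Matrix n n ℝ) Zbar *ᵥ c) := by
    intro c
    simp only [h, ← dotProduct_mulVec]
  have hhx : h ⬝ᵥ x ≠ 0 := by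
    rwa [hh, add_dotProduct, smul_dotProduct, smul_eq_mul]
  set φ := (h ⬝ᵥ x)⁻¹ • h
  have hφx : φ ⬝ᵥ x = 1 := by rw [smul_dotProduct, smul_eq_mul, inv_mul_cancel₀ hhx]
  refine ⟨Zbar + vecMulVec (y - Zbar *ᵥ x) φ, ?_, ?_⟩
  · rw [add_mulVec, vecMulVec_mulVec, hφx]
    simp
  refine .of_dotProduct_mulVec_nonneg ?_ fun ξ => ?_
  · simpa [conjTranspose_eq_transpose_of_trivial] using isHermitian_conjTranspose_mul_mul _ hN
  rw [star_trivial, dotProduct_transpose_mul_mul_mulVec, fromRows_one_add_vecMulVec_mulVec]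
  set a := φ ⬝ᵥ ξ
  have hc : (w + t • u) ⬝ᵥ N *ᵥ (fromRows (1 : Matrix n n ℝ) Zbar *ᵥ (ξ - a • x)) = 0 := by
    have hφc : φ ⬝ᵥ (ξ - a • x) = 0 := by
      rw [dotProduct_sub, dotProduct_smul, hφx, smul_eq_mul, mul_one, sub_self]
    rw [← hh, show h = (h ⬝ᵥ x) • φ by rw [smul_smul, mul_inv_cancel₀ hhx, one_smul],
      smul_dotProduct, hφc, smul_zero]
  rw [hN'.dotProduct_mulVec_smul_add ht hc, ← mulVec_smul, ← mulVec_sub,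
    ← dotProduct_transpose_mul_mul_mulVec]
  simpa using hG.posSemidef.dotProduct_mulVec_nonneg (ξ - a • x - (a * t) • x)

theorem dotProduct_mulVec_nonneg_of_pos_of_inl_ne_zero (hN : N.IsHermitian)
    (hG : ((fromRows (1 : Matrix n n ℝ) Zbar)ᵀ * N * fromRows (1 : Matrix n n ℝ) Zbar).PosDef)
    (hS : ∀ Z : Matrix m n ℝ,
      ((fromRows (1 : Matrix n n ℝ) Z)ᵀ * N * fromRows (1 : Matrix n n ℝ) Z).PosSemidef →
      ((fromRows (1 : Matrix n n ℝ) Z)ᵀ * M * fromRows (1 : Matrix n n ℝ) Z).PosSemidef)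
    {w : n ⊕ m → ℝ} (hx : w ∘ Sum.inl ≠ 0) (hw : 0 < w ⬝ᵥ N *ᵥ w) : 0 ≤ w ⬝ᵥ M *ᵥ w := by
  rw [← Sum.elim_comp_inl_inr w] at hw ⊢
  obtain ⟨Z, hZ, hNZ⟩ := exists_mulVec_eq_posSemidef_fromRows hN hG hx hw
  have := (hS Z hNZ).dotProduct_mulVec_nonneg (w ∘ Sum.inl)
  rwa [star_trivial, dotProduct_transpose_mul_mul_mulVec, fromRows_mulVec, one_mulVec, hZ] at this

open Filter Topology in
theorem dotProduct_mulVec_nonneg_of_nonneg [Nonempty n] (hN : N.IsHermitian)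
    (hG : ((fromRows (1 : Matrix n n ℝ) Zbar)ᵀ * N * fromRows (1 : Matrix n n ℝ) Zbar).PosDef)
    (hS : ∀ Z : Matrix m n ℝ,
      ((fromRows (1 : Matrix n n ℝ) Z)ᵀ * N * fromRows (1 : Matrix n n ℝ) Z).PosSemidef →
      ((fromRows (1 : Matrix n n ℝ) Z)ᵀ * M * fromRows (1 : Matrix n n ℝ) Z).PosSemidef)
    {w : n ⊕ m → ℝ} (hw : 0 ≤ w ⬝ᵥ N *ᵥ w) : 0 ≤ w ⬝ᵥ M *ᵥ w := by
  have hN' : N.IsSymm := isHermitian_iff_isSymm.mp hN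
  obtain ⟨e, he, hxe, hp⟩ : ∃ e ≠ 0, (∀ s : ℝ, 0 < |s| → |s| < 1 → w ∘ Sum.inl + s • e ≠ 0) ∧
      0 ≤ w ⬝ᵥ N *ᵥ (fromRows (1 : Matrix n n ℝ) Zbar *ᵥ e) := by
    obtain ⟨e, he, hxe⟩ := exists_ne_zero_forall_add_smul_ne_zero (w ∘ Sum.inl)
    rcases le_total 0 (w ⬝ᵥ N *ᵥ (fromRows (1 : Matrix n n ℝ) Zbar *ᵥ e)) with hp | hp
    · exact ⟨e, he, hxe, hp⟩
    · refine ⟨-e, neg_ne_zero.mpr he, fun s hs hs₁ => ?_, ?_⟩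
      · rw [smul_neg, ← neg_smul]
        exact hxe (-s) (by rwa [abs_neg]) (by rwa [abs_neg])
      · rwa [mulVec_neg, mulVec_neg, dotProduct_neg, neg_nonneg]
  set u := fromRows (1 : Matrix n n ℝ) Zbar *ᵥ e
  have hu : 0 < u ⬝ᵥ N *ᵥ u := by
    have := hG.dotProduct_mulVec_pos he
    rwa [star_trivial, dotProduct_transpose_mul_mul_mulVec] at this
  have hM : ∀ ε ∈ Set.Ioo (0 : ℝ) 1, 0 ≤ (w + ε • u) ⬝ᵥ M *ᵥ (w + ε • u) := by
    rintro ε ⟨hε₀, hε₁⟩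
    refine dotProduct_mulVec_nonneg_of_pos_of_inl_ne_zero hN hG hS ?_ ?_
    · have hinl : (w + ε • u) ∘ Sum.inl = w ∘ Sum.inl + ε • e := by
        ext i
        simp [u, fromRows_mulVec]
      rw [hinl]
      exact hxe ε (by rwa [abs_of_pos hε₀]) (by rwa [abs_of_pos hε₀])
    · simp only [mulVec_add, mulVec_smul, dotProduct_add, add_dotProduct, dotProduct_smul,
        smul_dotProduct, smul_eq_mul, hN'.dotProduct_mulVec_comm u w]
      positivity
  have hlim : Tendsto (fun ε : ℝ => (w + ε • u) ⬝ᵥ M *ᵥ (w + ε • u)) (𝓝[>] 0)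
      (𝓝 (w ⬝ᵥ M *ᵥ w)) := by
    refine tendsto_nhdsWithin_of_tendsto_nhds ?_
    simpa using ((by fun_prop : Continuous fun ε : ℝ =>
      (w + ε • u) ⬝ᵥ M *ᵥ (w + ε • u)).tendsto 0)
  exact ge_of_tendsto hlim (eventually_of_mem (Ioo_mem_nhdsGT one_pos) hM)

theorem s_lemma [Nonempty n] (hM : M.IsHermitian) (hN : N.IsHermitian)
    (hG : ((fromRows (1 : Matrix n n ℝ) Zbar)ᵀ * N * fromRows (1 : Matrix n n ℝ) Zbar).PosDef) :
    (∀ Z : Matrix m n ℝ,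
      ((fromRows (1 : Matrix n n ℝ) Z)ᵀ * N * fromRows (1 : Matrix n n ℝ) Z).PosSemidef →
      ((fromRows (1 : Matrix n n ℝ) Z)ᵀ * M * fromRows (1 : Matrix n n ℝ) Z).PosSemidef) ↔
      ∃ α : ℝ, 0 ≤ α ∧ (M - α • N).PosSemidef := by
  classical
  constructor
  · intro hS
    obtain ⟨e, he⟩ := exists_ne (0 : n → ℝ)
    have hslater := hG.dotProduct_mulVec_pos he
    rw [star_trivial, dotProduct_transpose_mul_mul_mulVec] at hslater
    obtain ⟨α, hα, hMN⟩ := QuadraticMap.s_lemma M.toQuadraticForm' N.toQuadraticForm'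
      (by simpa only [toQuadraticForm'_apply] using
        fun w => dotProduct_mulVec_nonneg_of_nonneg (w := w) hN hG hS)
      (v₀ := fromRows (1 : Matrix n n ℝ) Zbar *ᵥ e) (by rwa [toQuadraticForm'_apply])
    refine ⟨α, hα, .of_dotProduct_mulVec_nonneg (hM.sub (hN.smul (.all α))) fun w => ?_⟩
    simpa [toQuadraticForm'_apply, sub_mulVec, smul_mulVec] using hMN w
  · rintro ⟨α, hα, hMN⟩ Z hNZ
    have := (hMN.conjTranspose_mul_mul_same (fromRows (1 : Matrix n n ℝ) Z)).add (hNZ.smul hα)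
    simpa [conjTranspose_eq_transpose_of_trivial, Matrix.mul_sub, Matrix.sub_mul] using this

end Matrix

theorem stmt15_general (na nb : ℕ) (ha : 0 < na)
    (M N : Matrix (Fin na ⊕ Fin nb) (Fin na ⊕ Fin nb) ℝ)
    (hM : M.IsHermitian) (hN : N.IsHermitian)
    (Zbar : Matrix (Fin nb) (Fin na) ℝ)
    (hslater : ((Matrix.fromRows (1 : Matrix (Fin na) (Fin na) ℝ) Zbar)ᵀ * N * Matrix.fromRows 1 Zbar).PosDef) :
    (∀ Z : Matrix (Fin nb) (Fin na) ℝ,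
        ((Matrix.fromRows (1 : Matrix (Fin na) (Fin na) ℝ) Z)ᵀ * N * Matrix.fromRows 1 Z).PosSemidef →
        ((Matrix.fromRows (1 : Matrix (Fin na) (Fin na) ℝ) Z)ᵀ * M * Matrix.fromRows 1 Z).PosSemidef) ↔
      ∃ α : ℝ, 0 ≤ α ∧ (M - α • N).PosSemidef := by
  have : Nonempty (Fin na) := ⟨⟨0, ha⟩⟩
  exact Matrix.s_lemma hM hN hslater

/-- Matrix S-lemma: Let `M̃, Ñ` be symmetric matrices of size `n_a + n_b` and
suppose the generalized Slater condition holds: `[I; Z̄]ᵀ Ñ [I; Z̄] ≻ 0` for some `Z̄`.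
Then `[I; Z]ᵀ M̃ [I; Z] ⪰ 0` for all `Z` with `[I; Z]ᵀ Ñ [I; Z] ⪰ 0` if and only if there
exists `α ≥ 0` with `M̃ − αÑ ⪰ 0`. -/
theorem stmt15 (na nb : ℕ) (ha : 0 < na) (hb : 0 < nb)
    (M N : Matrix (Fin na ⊕ Fin nb) (Fin na ⊕ Fin nb) ℝ)
    (hM : M.IsHermitian) (hN : N.IsHermitian)
    (Zbar : Matrix (Fin nb) (Fin na) ℝ)
    (hslater : ((Matrix.fromRows (1 : Matrix (Fin na) (Fin na) ℝ) Zbar)ᵀ * N * Matrix.fromRows 1 Zbar).PosDef) :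
    (∀ Z : Matrix (Fin nb) (Fin na) ℝ,
        ((Matrix.fromRows (1 : Matrix (Fin na) (Fin na) ℝ) Z)ᵀ * N * Matrix.fromRows 1 Z).PosSemidef →
        ((Matrix.fromRows (1 : Matrix (Fin na) (Fin na) ℝ) Z)ᵀ * M * Matrix.fromRows 1 Z).PosSemidef) ↔
      ∃ α : ℝ, 0 ≤ α ∧ (M - α • N).PosSemidef :=
  stmt15_general na nb ha M N hM hN Zbar hslater
end

section
/- Let 𝒞₀ ⊆ ℝ^{n_x×n_h} be such that {Δ⊤ : Δ ∈ 𝒞₀} is a matrix ellipsoid, let K ∈ ℝ^{n_u×n_x}, and suppose there exists a symmetric matrix P ≻ 0 such that (Δ [I_{n_x}; K])⊤ P (Δ [I_{n_x}; K]) − P ≺ 0 for every Δ ∈ 𝒞₀. Let V₀ ⊆ ℝ^{n_x} be a bounded set and e₀ ∈ ℝ^{n_x}. Define E_0 := {e₀} and, for i ≥ 0, E_{i+1} := {Δ [I_{n_x}; K] e + v : Δ ∈ 𝒞₀, e ∈ E_i, v ∈ V₀}. Then there exists a bounded set E* ⊆ ℝ^{n_x} such that E_i ⊆ E* for all i ≥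 0. -/
/-!
Factor `P = BᵀB` so that `‖L e‖ = √(eᵀPe)` is a Euclidean norm; in it every closed-loop matrix
`Δ[I;K]` with `Δ ∈ 𝒞₀` is a strict contraction. A matrix ellipsoid is closed and bounded, so `𝒞₀`
is compact and the contraction factors are uniformly bounded by some `ρ < 1`. If `‖L v‖ ≤ c` on
`V₀`, the `L`-ball of radius `max ‖L e₀‖ (c / (1 - ρ))` contains `E₀` and is invariant under the
recursion.
-/

open Matrix

/-- `S` is a matrix ellipsoid: for some symmetric `E ≻ 0`, `F`, and symmetric `G` with
`FᵀE⁻¹F − G ≻ 0`, `S = {Z : ZᵀEZ + ZᵀF + FᵀZ + G ⪯ 0}`. -/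
def IsMatrixEllipsoid {p q : Type*} [Fintype p] [Fintype q] [DecidableEq p]
    (S : Set (Matrix p q ℝ)) : Prop :=
  ∃ (E : Matrix p p ℝ) (F : Matrix p q ℝ) (G : Matrix q q ℝ),
    E.IsHermitian ∧ G.IsHermitian ∧ E.PosDef ∧ (Fᵀ * E⁻¹ * F - G).PosDef ∧
    S = {Z | (-(Zᵀ * E * Z + Zᵀ * F + Fᵀ * Z + G)).PosSemidef}

namespace Matrix

variable {n : Type*} [Fintype n]

theorem isClosed_setOf_posSemidef : IsClosed {A : Matrix n n ℝ | A.PosSemidef} := by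
  have h : {A : Matrix n n ℝ | A.PosSemidef} =
      {A | Aᴴ = A} ∩ ⋂ x : n → ℝ, {A | 0 ≤ star x ⬝ᵥ (A *ᵥ x)} := by
    ext A
    simp only [Set.mem_ofPred_eq, Set.mem_inter_iff, Set.mem_iInter]
    exact posSemidef_iff_dotProduct_mulVec
  rw [h]
  exact (isClosed_eq continuous_id.matrix_conjTranspose continuous_id).inter <|
    isClosed_iInter fun x => isClosed_le continuous_const <|
      continuous_const.dotProduct (continuous_id.matrix_mulVec continuous_const)

theorem PosSemidef.exists_linearMap_norm_sq_eq {P : Matrix n n ℝ} (hP : P.PosSemidef) :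
    ∃ L : (n → ℝ) →ₗ[ℝ] EuclideanSpace ℝ n, ∀ e, ‖L e‖ ^ 2 = e ⬝ᵥ (P *ᵥ e) := by
  classical
  open scoped MatrixOrder in
  obtain ⟨B, rfl⟩ := CStarAlgebra.nonneg_iff_eq_star_mul_self.mp hP.nonneg
  refine ⟨(WithLp.linearEquiv 2 ℝ (n → ℝ)).symm.toLinearMap ∘ₗ B.mulVecLin, fun e => ?_⟩
  rw [EuclideanSpace.real_norm_sq_eq, ← mulVec_mulVec, dotProduct_mulVec, star_eq_conjTranspose,
    conjTranspose_eq_transpose_of_trivial, vecMul_transpose]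
  simp [dotProduct, sq]

theorem PosDef.exists_continuousLinearEquiv_norm_sq_eq {P : Matrix n n ℝ} (hP : P.PosDef) :
    ∃ L : (n → ℝ) ≃L[ℝ] EuclideanSpace ℝ n, ∀ e, ‖L e‖ ^ 2 = e ⬝ᵥ (P *ᵥ e) := by
  obtain ⟨L, hL⟩ := hP.posSemidef.exists_linearMap_norm_sq_eq
  have hinj : Function.Injective L := by
    refine (injective_iff_map_eq_zero L).mpr fun e he => ?_
    by_contra hne
    have hpos := hP.dotProduct_mulVec_pos hne
    rw [star_trivial, ← hL, he, norm_zero] at hpos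
    norm_num at hpos
  exact ⟨(L.linearEquivOfInjective hinj (by simp)).toContinuousLinearEquiv, hL⟩

theorem dotProduct_mulVec_lt_of_posDef_sub {P A : Matrix n n ℝ} (h : (P - Aᵀ * P * A).PosDef)
    {e : n → ℝ} (he : e ≠ 0) : (A *ᵥ e) ⬝ᵥ (P *ᵥ (A *ᵥ e)) < e ⬝ᵥ (P *ᵥ e) := by
  have hpos := h.dotProduct_mulVec_pos he
  rw [star_trivial, sub_mulVec, dotProduct_sub, ← mulVec_mulVec, ← mulVec_mulVec,
    dotProduct_mulVec e Aᵀ, vecMul_transpose] at hpos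
  linarith

theorem PosDef.isBounded_setOf_dotProduct_mulVec_add_le {E : Matrix n n ℝ} (hE : E.PosDef)
    (b : n → ℝ) (c : ℝ) : Bornology.IsBounded {w : n → ℝ | w ⬝ᵥ (E *ᵥ w) + b ⬝ᵥ w ≤ c} := by
  obtain ⟨L, hL⟩ := hE.exists_continuousLinearEquiv_norm_sq_eq
  let ℓ : (n → ℝ) →L[ℝ] ℝ := LinearMap.toContinuousLinearMap
    { toFun := (b ⬝ᵥ ·), map_add' := dotProduct_add b, map_smul' := fun r w => dotProduct_smul r b w }
  set β := ‖ℓ‖ * ‖(L.symm : EuclideanSpace ℝ n →L[ℝ] n → ℝ)‖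
  have hlin : ∀ w, |b ⬝ᵥ w| ≤ β * ‖L w‖ := fun w => calc
    |b ⬝ᵥ w| = ‖ℓ (L.symm (L w))‖ := by simp [ℓ]
    _ ≤ β * ‖L w‖ := by
      rw [mul_assoc]
      exact ℓ.le_opNorm_of_le ((L.symm : EuclideanSpace ℝ n →L[ℝ] n → ℝ).le_opNorm _)
  refine (L.antilipschitz.isBounded_preimage (Metric.isBounded_closedBall (x := 0)
    (r := β + |c| + 1))).subset fun w hw => ?_
  have hq : ‖L w‖ ^ 2 ≤ β * ‖L w‖ + |c| := by
    rw [hL]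
    linarith [(abs_le.mp (hlin w)).1, le_abs_self c, Set.mem_ofPred_eq ▸ hw]
  have hβ : 0 ≤ β := by positivity
  simp only [Set.mem_preimage, mem_closedBall_zero_iff]
  nlinarith [norm_nonneg (L w), abs_nonneg c]

-- `A * fromRows 1 K` elaborates through the `HMul` instance of `CStarMatrix`, which
-- `rw [← mulVec_mulVec]` does not match; hence the term-mode proof.
theorem mul_fromRows_one_mulVec {m p : Type*} [Fintype p] [DecidableEq n]
    (A : Matrix m (n ⊕ p) ℝ) (K : Matrix p n ℝ) (e : n → ℝ) :
    (A * fromRows 1 K) *ᵥ e = A *ᵥ Sum.elim e (K *ᵥ e) :=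
  (mulVec_mulVec e A (fromRows 1 K)).symm.trans (by rw [fromRows_mulVec, one_mulVec])

end Matrix

theorem IsMatrixEllipsoid.isCompact {p q : Type*} [Fintype p] [Fintype q] [DecidableEq p]
    {S : Set (Matrix p q ℝ)} (h : IsMatrixEllipsoid S) : IsCompact S := by
  classical
  obtain ⟨E, F, G, -, -, hE, -, rfl⟩ := h
  have hclosed :
      IsClosed {Z : Matrix p q ℝ | (-(Zᵀ * E * Z + Zᵀ * F + Fᵀ * Z + G)).PosSemidef} :=
    isClosed_setOf_posSemidef.preimage <| by fun_prop
  have hcol (j : q) : Bornology.IsBounded ((· *ᵥ Pi.single j 1) ''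
      {Z : Matrix p q ℝ | (-(Zᵀ * E * Z + Zᵀ * F + Fᵀ * Z + G)).PosSemidef}) := by
    set x : q → ℝ := Pi.single j 1
    refine (hE.isBounded_setOf_dotProduct_mulVec_add_le ((2 : ℝ) • (F *ᵥ x))
      (-(x ⬝ᵥ (G *ᵥ x)))).subset ?_
    rintro _ ⟨Z, hZ, rfl⟩
    have hx := hZ.dotProduct_mulVec_nonneg x
    simp only [neg_mulVec, add_mulVec, ← mulVec_mulVec, dotProduct_neg, dotProduct_add,
      star_trivial, dotProduct_mulVec x Zᵀ, dotProduct_mulVec x Fᵀ, vecMul_transpose] at hx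
    rw [dotProduct_comm (F *ᵥ x)] at hx
    simp only [Set.mem_ofPred_eq, smul_dotProduct, smul_eq_mul, dotProduct_comm (F *ᵥ x)]
    linarith
  refine Metric.isCompact_of_isClosed_isBounded (α := p → q → ℝ) hclosed ?_
  refine Bornology.forall_isBounded_image_eval_iff.1 fun i =>
    Bornology.forall_isBounded_image_eval_iff.1 fun j => ((hcol j).image_eval i).subset ?_
  rintro _ ⟨_, ⟨Z, hZ, rfl⟩, rfl⟩
  exact ⟨_, ⟨Z, hZ, rfl⟩, congrFun (mulVec_single_one Z j) i⟩

open Set Metric in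
theorem IsCompact.exists_lt_one_forall_opNorm_le {α E F : Type*} [TopologicalSpace α]
    [NormedAddCommGroup E] [NormedSpace ℝ E] [FiniteDimensional ℝ E]
    [NormedAddCommGroup F] [NormedSpace ℝ F] {S : Set α} (hS : IsCompact S)
    {T : α → E →L[ℝ] F} (hT : Continuous fun p : α × E => T p.1 p.2)
    (hlt : ∀ a ∈ S, ∀ x ≠ 0, ‖T a x‖ < ‖x‖) :
    ∃ ρ, 0 ≤ ρ ∧ ρ < 1 ∧ ∀ a ∈ S, ‖T a‖ ≤ ρ := by
  rcases (S ×ˢ sphere (0 : E) 1).eq_empty_or_nonempty with hempty | hne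
  · refine ⟨0, le_rfl, zero_lt_one, fun a ha => (T a).opNorm_le_of_unit_norm le_rfl fun x hx => ?_⟩
    exact absurd (hempty ▸ mk_mem_prod ha (mem_sphere_zero_iff_norm.mpr hx)) (notMem_empty _)
  obtain ⟨⟨a₀, x₀⟩, ⟨ha₀, hx₀⟩, hmax⟩ :=
    (hS.prod (isCompact_sphere 0 1)).exists_isMaxOn hne (continuous_norm.comp hT).continuousOn
  rw [mem_sphere_zero_iff_norm] at hx₀
  refine ⟨‖T a₀ x₀‖, norm_nonneg _, hx₀ ▸ hlt a₀ ha₀ x₀ (norm_ne_zero_iff.mp (by simp [hx₀])),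
    fun a ha => (T a).opNorm_le_of_unit_norm (norm_nonneg _) fun x hx => ?_⟩
  exact hmax (mk_mem_prod ha (mem_sphere_zero_iff_norm.mpr hx))

theorem forall_mem_le_max_of_contracting {X ι : Type*} [Add X] {N : X → ℝ}
    (hN : ∀ x y, N (x + y) ≤ N x + N y) {S : Set ι} {f : ι → X → X} {ρ c : ℝ}
    (hρ₀ : 0 ≤ ρ) (hρ₁ : ρ < 1) (hf : ∀ a ∈ S, ∀ x, N (f a x) ≤ ρ * N x)
    {V : Set X} (hV : ∀ v ∈ V, N v ≤ c) {e₀ : X} {E : ℕ → Set X} (hE₀ : E 0 = {e₀})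
    (hE : ∀ i, E (i + 1) = {y | ∃ a ∈ S, ∃ e ∈ E i, ∃ v ∈ V, y = f a e + v}) :
    ∀ i, ∀ e ∈ E i, N e ≤ max (N e₀) (c / (1 - ρ)) := by
  set R := max (N e₀) (c / (1 - ρ))
  have hc : c ≤ (1 - ρ) * R := by
    rw [← div_le_iff₀' (by linarith)]
    exact le_max_right _ _
  intro i
  induction i with
  | zero =>
    rintro e he
    rw [hE₀, Set.mem_singleton_iff] at he
    exact he ▸ le_max_left _ _
  | succ i ih =>
    rintro _ hy
    rw [hE] at hy
    obtain ⟨a, ha, e, he, v, hv, rfl⟩ := hy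
    calc N (f a e + v) ≤ ρ * N e + c := (hN _ _).trans (add_le_add (hf a ha e) (hV v hv))
      _ ≤ ρ * R + (1 - ρ) * R := by gcongr; exact ih e he
      _ = R := by ring

theorem stmt18_general (n_x n_u : ℕ)
    (C0 : Set (Matrix (Fin n_x) (Fin n_x ⊕ Fin n_u) ℝ))
    (hC0 : IsMatrixEllipsoid ((fun Δ => Δᵀ) '' C0))
    (K : Matrix (Fin n_u) (Fin n_x) ℝ)
    (P : Matrix (Fin n_x) (Fin n_x) ℝ) (hP : P.PosDef)
    (hcontract : ∀ Δ ∈ C0,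
      (P - (Δ * Matrix.fromRows 1 K)ᵀ * P * (Δ * Matrix.fromRows 1 K)).PosDef)
    (V0 : Set (Fin n_x → ℝ)) (hV0 : Bornology.IsBounded V0)
    (e0 : Fin n_x → ℝ)
    (E : ℕ → Set (Fin n_x → ℝ)) (hE0 : E 0 = {e0})
    (hEsucc : ∀ i, E (i + 1) =
      {y | ∃ Δ ∈ C0, ∃ e ∈ E i, ∃ v ∈ V0, y = Δ.mulVec (Sum.elim e (K.mulVec e)) + v}) :
    ∃ Estar : Set (Fin n_x → ℝ), Bornology.IsBounded Estar ∧ ∀ i, E i ⊆ Estar := by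
  obtain ⟨L, hL⟩ := hP.exists_continuousLinearEquiv_norm_sq_eq
  have hC0c : IsCompact C0 := by
    simpa [Set.image_image] using hC0.isCompact.image continuous_id.matrix_transpose
  let T (Δ : Matrix (Fin n_x) (Fin n_x ⊕ Fin n_u) ℝ) :
      EuclideanSpace ℝ (Fin n_x) →L[ℝ] EuclideanSpace ℝ (Fin n_x) :=
    (L : (Fin n_x → ℝ) →L[ℝ] _) ∘L (Δ * fromRows 1 K).mulVecLin.toContinuousLinearMap ∘L
      (L.symm : EuclideanSpace ℝ (Fin n_x) →L[ℝ] _)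
  have hT : ∀ Δ y, T Δ y = L ((Δ * fromRows 1 K) *ᵥ L.symm y) := fun _ _ => rfl
  have hlt : ∀ Δ ∈ C0, ∀ y ≠ 0, ‖T Δ y‖ < ‖y‖ := by
    intro Δ hΔ y hy
    obtain ⟨e, rfl⟩ := L.surjective y
    have he : e ≠ 0 := by rintro rfl; simp at hy
    rw [hT, L.symm_apply_apply]
    refine lt_of_pow_lt_pow_left₀ 2 (norm_nonneg _) ?_
    rw [hL, hL]
    exact dotProduct_mulVec_lt_of_posDef_sub (hcontract Δ hΔ) he
  obtain ⟨ρ, hρ₀, hρ₁, hρ⟩ := hC0c.exists_lt_one_forall_opNorm_le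
    (by simp only [hT]; fun_prop) hlt
  obtain ⟨c, hc⟩ := (L.lipschitz.isBounded_image hV0).exists_norm_le
  have hbound := forall_mem_le_max_of_contracting (N := fun e => ‖L e‖)
    (fun x y => by simpa using norm_add_le (L x) (L y)) hρ₀ hρ₁
    (fun Δ hΔ e => by
      simpa only [hT, L.symm_apply_apply, mul_fromRows_one_mulVec]
        using (T Δ).le_of_opNorm_le (hρ Δ hΔ) (L e))
    (fun v hv => hc _ (Set.mem_image_of_mem _ hv)) hE0 hEsucc
  exact ⟨L ⁻¹' Metric.closedBall 0 (max ‖L e0‖ (c / (1 - ρ))),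
    L.antilipschitz.isBounded_preimage Metric.isBounded_closedBall,
    fun i e he => by simpa using hbound i e he⟩

/-- Let `𝒞₀` (transposed) be a matrix ellipsoid, `K` a feedback gain, and
suppose there is a symmetric `P ≻ 0` with `(Δ[I;K])ᵀ P (Δ[I;K]) − P ≺ 0` for all
`Δ ∈ 𝒞₀`. Let `V₀` be a bounded set, `E₀ = {e₀}` and
`E_{i+1} = {Δ[I;K]e + v : Δ ∈ 𝒞₀, e ∈ E_i, v ∈ V₀}`. Then there is a bounded set `E*`
containing every `E_i`. -/
theorem stmt18 (n_x n_u : ℕ) (hx : 0 < n_x) (hu : 0 < n_u)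
    (C0 : Set (Matrix (Fin n_x) (Fin n_x ⊕ Fin n_u) ℝ))
    (hC0 : IsMatrixEllipsoid ((fun Δ => Δᵀ) '' C0))
    (K : Matrix (Fin n_u) (Fin n_x) ℝ)
    (P : Matrix (Fin n_x) (Fin n_x) ℝ) (hP : P.PosDef)
    (hcontract : ∀ Δ ∈ C0,
      (P - (Δ * Matrix.fromRows 1 K)ᵀ * P * (Δ * Matrix.fromRows 1 K)).PosDef)
    (V0 : Set (Fin n_x → ℝ)) (hV0 : Bornology.IsBounded V0)
    (e0 : Fin n_x → ℝ)
    (E : ℕ → Set (Fin n_x → ℝ)) (hE0 : E 0 = {e0})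
    (hEsucc : ∀ i, E (i + 1) =
      {y | ∃ Δ ∈ C0, ∃ e ∈ E i, ∃ v ∈ V0, y = Δ.mulVec (Sum.elim e (K.mulVec e)) + v}) :
    ∃ Estar : Set (Fin n_x → ℝ), Bornology.IsBounded Estar ∧ ∀ i, E i ⊆ Estar :=
  stmt18_general n_x n_u C0 hC0 K P hP hcontract V0 hV0 e0 E hE0 hEsucc
end
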